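/- arXiv:1507.00141 — 7 statements merged into one kernel-verified Lean document; each statement's English description precedes it below -/
import Mathlib

section
/- Let T > t0 and δ ∈ (0, δ0]. Suppose the initial function satisfies |φ(t)| ≤ δ e^{L(t0 − T)} for all t ≤ t0. Then any solution u of the state-dependent DDE defined on [t0, T] with values of norm at most δ0 satisfies |u(t)| ≤ δ e^{L(t − T)} ≤ δ for all t ∈ [t0, T]. -/
open Set

set_option maxHeartbeats 1000000 in
/-- Lemma 2.1, Part II of Humphries–Magpantay:
growth bound for a solution of a state-dependent DDE with small initial function. -/
theorem stmt_1
    (d N : ℕ) (hd : 1 ≤ d) (hN : 1 ≤ N)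
    (t0 T : ℝ) (hT : t0 < T)
    (f : ℝ → EuclideanSpace ℝ (Fin d) → (Fin N → EuclideanSpace ℝ (Fin d)) →
      EuclideanSpace ℝ (Fin d))
    (τ : Fin N → ℝ → EuclideanSpace ℝ (Fin d) → ℝ)
    (hfcont : Continuous fun p : ℝ × EuclideanSpace ℝ (Fin d) ×
      (Fin N → EuclideanSpace ℝ (Fin d)) => f p.1 p.2.1 p.2.2)
    (hτcont : ∀ i, Continuous fun p : ℝ × EuclideanSpace ℝ (Fin d) => τ i p.1 p.2)
    (hf0 : ∀ t, t0 ≤ t → f t 0 0 = 0)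
    (hτ0 : ∀ i t x, t0 ≤ t → 0 ≤ τ i t x)
    (L0 : ℝ) (Li : Fin N → ℝ) (δ0 L : ℝ)
    (hL0 : 0 < L0) (hLi : ∀ i, 0 < Li i) (hδ0 : 0 < δ0)
    (hLdef : L = L0 + ∑ i, Li i)
    (hLip : ∀ t, t0 ≤ t → ∀ (x x' : EuclideanSpace ℝ (Fin d))
      (v v' : Fin N → EuclideanSpace ℝ (Fin d)),
      ‖x‖ ≤ δ0 → ‖x'‖ ≤ δ0 → (∀ i, ‖v i‖ ≤ δ0) → (∀ i, ‖v' i‖ ≤ δ0) →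
      ‖f t x v - f t x' v'‖ ≤ L0 * ‖x - x'‖ + ∑ i, Li i * ‖v i - v' i‖)
    (δ : ℝ) (hδ : 0 < δ) (hδδ0 : δ ≤ δ0)
    (φ u : ℝ → EuclideanSpace ℝ (Fin d))
    (hφbd : ∀ t ≤ t0, ‖φ t‖ ≤ δ * Real.exp (L * (t0 - T)))
    -- u is a solution on [t0, T] with initial function φ, with values of norm at most δ0
    (hu : Continuous u ∧ (∀ t ≤ t0, u t = φ t) ∧
      ∀ t ∈ Icc t0 T,
        HasDerivWithinAt u (f t (u t) fun i => u (t - τ i t (u t))) (Ici t0) t)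
    (hubd : ∀ t ∈ Icc t0 T, ‖u t‖ ≤ δ0) :
    ∀ t ∈ Icc t0 T, ‖u t‖ ≤ δ * Real.exp (L * (t - T)) ∧ δ * Real.exp (L * (t - T)) ≤ δ := by
  obtain ⟨hucont, huφ, huderiv⟩ := hu
  have hsum : 0 ≤ ∑ i, Li i := Finset.sum_nonneg fun i _ => (hLi i).le
  have hLpos : 0 < L := by rw [hLdef]; linarith
  have hT0 : t0 ≤ T := hT.le
  have hexp1 : Real.exp (L * (t0 - T)) ≤ 1 := by
    calc Real.exp (L * (t0 - T)) ≤ Real.exp 0 := Real.exp_le_exp.2 (by nlinarith)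
      _ = 1 := Real.exp_zero
  have hall : ∀ s, s ≤ T → ‖u s‖ ≤ δ0 := by
    intro s hs
    rcases le_or_gt s t0 with h | h
    · rw [huφ s h]
      have := hφbd s h
      nlinarith [Real.exp_pos (L * (t0 - T))]
    · exact hubd s ⟨h.le, hs⟩
  set D : ℝ → EuclideanSpace ℝ (Fin d) :=
    fun t => f t (u t) fun i => u (t - τ i t (u t)) with hDdef
  have hDb : ∀ t ∈ Icc t0 T, ∀ M : ℝ, (∀ s, s ≤ t → ‖u s‖ ≤ M) → ‖D t‖ ≤ L * M := by
    intro t ht M hM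
    have hτle : ∀ i : Fin N, t - τ i t (u t) ≤ t := fun i => by
      have := hτ0 i t (u t) ht.1; linarith
    have h1 := hLip t ht.1 (u t) 0 (fun i => u (t - τ i t (u t))) 0
      (hall t ht.2) (by simp [hδ0.le])
      (fun i => hall _ ((hτle i).trans ht.2)) (fun i => by simp [hδ0.le])
    rw [hf0 t ht.1, sub_zero] at h1
    have h2 : ‖D t‖ ≤ L0 * ‖u t‖ + ∑ i, Li i * ‖u (t - τ i t (u t))‖ := by
      simpa using h1
    have h3 : L0 * ‖u t‖ + ∑ i, Li i * ‖u (t - τ i t (u t))‖ ≤ L0 * M + ∑ i, Li i * M := by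
      gcongr with i hi
      · exact hM t le_rfl
      · exact (hLi i).le
      · exact hM _ (hτle i)
    have h4 : L0 * M + ∑ i, Li i * M = L * M := by
      rw [hLdef, ← Finset.sum_mul]; ring
    linarith
  have key : ∀ ε : ℝ, 0 < ε → ∀ t ∈ Icc t0 T,
      ‖u t‖ ≤ δ * Real.exp (ε * (T - t0)) * Real.exp ((L + ε) * (t - T)) := by
    intro ε hε
    set B : ℝ → ℝ := fun t => δ * Real.exp (ε * (T - t0)) * Real.exp ((L + ε) * (t - T))
      with hBdef
    have hBpos : ∀ t, 0 < B t := fun t => by positivity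
    have hBmono : ∀ s t : ℝ, s ≤ t → B s ≤ B t := by
      intro s t hst
      simp only [hBdef]
      gcongr
    have hBt0 : B t0 = δ * Real.exp (L * (t0 - T)) := by
      have e : ε * (T - t0) + (L + ε) * (t0 - T) = L * (t0 - T) := by ring
      simp only [hBdef]
      rw [mul_assoc, ← Real.exp_add, e]
    have hB0 : ∀ s, s ≤ t0 → ‖u s‖ ≤ B t0 := by
      intro s hs; rw [huφ s hs, hBt0]; exact hφbd s hs
    have hBconv : ∀ c t : ℝ, c ≤ t → B c + (L + ε) * B c * (t - c) ≤ B t := by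
      intro c t hct
      have h1 : (L + ε) * (t - c) + 1 ≤ Real.exp ((L + ε) * (t - c)) :=
        Real.add_one_le_exp _
      have hBt : B t = B c * Real.exp ((L + ε) * (t - c)) := by
        have e : (L + ε) * (t - T) = (L + ε) * (c - T) + (L + ε) * (t - c) := by ring
        simp only [hBdef]
        rw [e, Real.exp_add]; ring
      rw [hBt]
      nlinarith [hBpos c, mul_le_mul_of_nonneg_left h1 (hBpos c).le]
    set S : Set ℝ := {t | t ∈ Icc t0 T ∧ ∀ s ∈ Icc t0 t, ‖u s‖ ≤ B s} with hSdef
    have ht0S : t0 ∈ S := by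
      refine ⟨⟨le_refl _, hT0⟩, fun s hs => ?_⟩
      have : s = t0 := le_antisymm hs.2 hs.1
      rw [this]; exact hB0 t0 le_rfl
    have hSbdd : BddAbove S := ⟨T, fun t ht => ht.1.2⟩
    have hSne : S.Nonempty := ⟨t0, ht0S⟩
    set c := sSup S with hc
    have hct0 : t0 ≤ c := le_csSup hSbdd ht0S
    have hcT : c ≤ T := csSup_le hSne fun t ht => ht.1.2
    have hCclosed : IsClosed {s : ℝ | ‖u s‖ ≤ B s} := by
      apply isClosed_le hucont.norm
      simp only [hBdef]
      fun_prop
    have hbdc : ∀ s ∈ Icc t0 c, ‖u s‖ ≤ B s := by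
      intro s hs
      rcases eq_or_lt_of_le hs.1 with h0 | h0
      · rw [← h0]; exact hB0 t0 le_rfl
      · have hsub : Ico t0 s ⊆ {x : ℝ | ‖u x‖ ≤ B x} := by
          intro x hx
          obtain ⟨t, htS, hxt⟩ := exists_lt_of_lt_csSup hSne (lt_of_lt_of_le hx.2 hs.2)
          exact htS.2 x ⟨hx.1, hxt.le⟩
        have h2 : Icc t0 s ⊆ {x : ℝ | ‖u x‖ ≤ B x} := by
          rw [← closure_Ico h0.ne]
          exact closure_minimal hsub hCclosed
        exact h2 ⟨hs.1, le_refl s⟩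
    have hcT' : c = T := by
      by_contra hne
      have hclt : c < T := lt_of_le_of_ne hcT hne
      have hhist : ∀ s, s ≤ c → ‖u s‖ ≤ B c := by
        intro s hs
        rcases le_or_gt s t0 with h | h
        · exact (hB0 s h).trans (hBmono t0 c hct0)
        · exact (hbdc s ⟨h.le, hs⟩).trans (hBmono s c hs)
      have hDc : ‖D c‖ ≤ L * B c := hDb c ⟨hct0, hcT⟩ (B c) hhist
      have hder : HasDerivWithinAt u (D c) (Ici c) c :=
        (huderiv c ⟨hct0, hcT⟩).mono (Ici_subset_Ici.2 hct0)
      set r : ℝ := (L + ε / 2) * B c with hrdef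
      have hrD : ‖D c‖ < r := lt_of_le_of_lt hDc (by nlinarith [hBpos c])
      have hlo := (hasDerivWithinAt_iff_isLittleO.mp hder).def (sub_pos.2 hrD)
      rw [eventually_nhdsWithin_iff] at hlo
      rw [Metric.eventually_nhds_iff] at hlo
      obtain ⟨η, hη, hball⟩ := hlo
      set t1 : ℝ := min (c + η / 2) T with ht1def
      have hct1 : c < t1 := lt_min (by linarith) hclt
      have ht1S : t1 ∈ S := by
        refine ⟨⟨hct0.trans hct1.le, min_le_right _ _⟩, fun s hs => ?_⟩
        rcases le_or_gt s c with h | h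
        · exact hbdc s ⟨hs.1, h⟩
        · have hdist : dist s c < η := by
            rw [Real.dist_eq, abs_of_nonneg (by linarith : (0:ℝ) ≤ s - c)]
            have : s ≤ c + η / 2 := hs.2.trans (min_le_left _ _)
            linarith
          have hball' := hball hdist (h.le : s ∈ Ici c)
          have hnorm : ‖u s - u c‖ ≤ r * (s - c) := by
            have h5 : ‖u s - u c‖ ≤ ‖u s - u c - (s - c) • D c‖ + ‖(s - c) • D c‖ := by
              have := norm_add_le (u s - u c - (s - c) • D c) ((s - c) • D c)
              simpa using this
            have h6 : ‖(s - c) • D c‖ = |s - c| * ‖D c‖ := by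
              rw [norm_smul, Real.norm_eq_abs]
            have h7 : ‖s - c‖ = s - c := by
              rw [Real.norm_eq_abs, abs_of_nonneg (by linarith)]
            rw [h7] at hball'
            rw [h6, abs_of_nonneg (by linarith : (0:ℝ) ≤ s - c)] at h5
            nlinarith [norm_nonneg (D c)]
          have hconv := hBconv c s h.le
          have huc : ‖u c‖ ≤ B c := hbdc c ⟨hct0, le_rfl⟩
          have h8 : ‖u s‖ ≤ ‖u c‖ + ‖u s - u c‖ := by
            have := norm_add_le (u c) (u s - u c)
            simpa using this
          have hr2 : r * (s - c) ≤ (L + ε) * B c * (s - c) := by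
            apply mul_le_mul_of_nonneg_right _ (by linarith : (0:ℝ) ≤ s - c)
            nlinarith [hBpos c]
          linarith
      have := le_csSup hSbdd ht1S
      rw [← hc] at this
      linarith
    intro t ht
    exact hbdc t ⟨ht.1, le_of_le_of_eq ht.2 hcT'.symm⟩
  intro t ht
  constructor
  · have hlim : Filter.Tendsto
        (fun ε : ℝ => δ * Real.exp (ε * (T - t0)) * Real.exp ((L + ε) * (t - T)))
        (nhdsWithin 0 (Ioi 0)) (nhds (δ * Real.exp (L * (t - T)))) := by
      have hc : Continuous fun ε : ℝ =>
          δ * Real.exp (ε * (T - t0)) * Real.exp ((L + ε) * (t - T)) := by fun_prop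
      have h0 := hc.tendsto 0
      simp only [zero_mul, Real.exp_zero, mul_one, add_zero] at h0
      exact h0.mono_left nhdsWithin_le_nhds
    refine ge_of_tendsto hlim ?_
    filter_upwards [self_mem_nhdsWithin] with ε hε
    exact key ε hε t ht
  · have h1 : Real.exp (L * (t - T)) ≤ 1 := by
      calc Real.exp (L * (t - T)) ≤ Real.exp 0 :=
            Real.exp_le_exp.2 (by nlinarith [ht.2])
        _ = 1 := Real.exp_zero
    nlinarith
end

section
/- Suppose there exists δ1 ∈ (0, δ0] with the following property: for every δ ∈ (0, δ1), every x ∈ ℝ^d with |x| = δ, every t ≥ t0 + k r(δ), and every N-tuple (η₁,…,η_N) ∈ E_{(k)}(δ,x,t), there is an index I ∈ {1,…,N} with τ_I(t,x) > 0 such that any solution v of the auxiliary ODE v'(θ) = f(t+θ, v(θ), η₁(θ), …, η_N(θ)) on [−τ_I(t,x), 0] with v(−τ_I(t,x)) = η_I(0) satisfies either v(0)·x < δ², or v(0)·x = δ² together with v'(0)·x ≤ 0. Then the zero solution of the DDE is Lyapunov stable; moreover, for any δ ∈ (0, δ1), if the initial function satisfies |φ(s)| < δ e^{−L k r(δ)}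 for all s ∈ [t0 − r(δ), t0], then every solution of the DDE satisfies |u(t)| ≤ δ for all t ≥ t0. -/
/-!
Suppose a solution with small initial data leaves the ball of radius `δ`, for the first time at
`t₁`. A Grönwall estimate in which the right-hand side is controlled by the whole past of `u`
shows `t₁ > t₀ + k r(δ)`. Because the delays are Lipschitz in the state, `r` is upper
semicontinuous from the right, so for every level `δ'` slightly above `δ`, at the first time `s`
with `‖u(s)‖ = δ'` the delayed values of `u` form an element of `E_{(k)}(δ', u(s), s)`, and
`θ ↦ u(s + θ)` solves the auxiliary ODE. The hypothesis then forces `d/dt ‖u‖² = 0` at `s`. So a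
whole interval of values of `‖u‖²` consists of critical values, which contradicts the
one-dimensional Morse–Sard theorem.
-/

open Set Filter
open scoped RealInnerProductSpace

/-- A solution of the state-dependent DDE
`u'(t) = f(t, u(t), u(t-τ₁(t,u(t))), …, u(t-τ_N(t,u(t))))` for `t ≥ t0`,
with initial function `φ` on `(-∞, t0]`. -/
def IsSolDDE (d N : ℕ) (t0 : ℝ)
    (f : ℝ → EuclideanSpace ℝ (Fin d) → (Fin N → EuclideanSpace ℝ (Fin d)) →
      EuclideanSpace ℝ (Fin d))
    (τ : Fin N → ℝ → EuclideanSpace ℝ (Fin d) → ℝ)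
    (φ u : ℝ → EuclideanSpace ℝ (Fin d)) : Prop :=
  Continuous u ∧ (∀ t ≤ t0, u t = φ t) ∧
    ∀ t, t0 ≤ t →
      HasDerivWithinAt u (f t (u t) fun i => u (t - τ i t (u t))) (Set.Ici t0) t

open Topology MeasureTheory

theorem exists_first_hit {g : ℝ → ℝ} (hg : Continuous g) {a b c : ℝ} (hab : a ≤ b)
    (ha : g a < c) (hb : c ≤ g b) : ∃ s ∈ Ioc a b, g s = c ∧ ∀ t ∈ Ico a s, g t < c := by
  set T := Ici a ∩ g ⁻¹' Ici c
  have hTne : T.Nonempty := ⟨b, hab, hb⟩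
  have hTbdd : BddBelow T := ⟨a, fun t ht => ht.1⟩
  have hsT : sInf T ∈ T := (isClosed_Ici.inter (isClosed_Ici.preimage hg)).csInf_mem hTne hTbdd
  have hbefore : ∀ t ∈ Ico a (sInf T), g t < c := fun t ht =>
    not_le.1 fun h => (csInf_le hTbdd ⟨ht.1, h⟩).not_gt ht.2
  have has : a < sInf T := hsT.1.lt_of_ne fun h => (h ▸ ha).not_ge hsT.2
  have hle : g (sInf T) ≤ c :=
    le_of_tendsto hg.continuousAt.continuousWithinAt.tendsto <| by
      filter_upwards [Ioo_mem_nhdsLT has] with t ht using (hbefore t ⟨ht.1.le, ht.2⟩).le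
  exact ⟨sInf T, ⟨has, csInf_le hTbdd ⟨hab, hb⟩⟩, hle.antisymm hsT.2, hbefore⟩

theorem le_norm_of_hasDerivAt_of_norm_le_left {E : Type*} [NormedAddCommGroup E]
    [NormedSpace ℝ E] {u : ℝ → E} {B : ℝ → ℝ} {u' : E} {B' c : ℝ} (hu : HasDerivAt u u' c)
    (hB : HasDerivAt B B' c) (hle : ∀ᶠ t in 𝓝[<] c, ‖u t‖ ≤ B t) (hc : B c ≤ ‖u c‖) :
    B' ≤ ‖u'‖ := by
  refine le_of_tendsto_of_tendsto (hasDerivAt_iff_tendsto_slope_left_right.1 hB).1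
    (hasDerivAt_iff_tendsto_slope_left_right.1 hu).1.norm ?_
  filter_upwards [hle, self_mem_nhdsWithin] with t ht htc
  have hct : 0 < c - t := sub_pos.2 htc
  calc slope B c t = (B c - B t) / (c - t) := by
        rw [slope_def_field, ← neg_sub c t, ← neg_sub (B c), neg_div_neg_eq]
    _ ≤ ‖u c - u t‖ / (c - t) := by
        gcongr
        linarith [norm_sub_norm_le (u c) (u t)]
    _ = ‖slope u c t‖ := by
        rw [slope_def_module, norm_smul, norm_inv, Real.norm_eq_abs, abs_of_neg (by linarith),
          neg_sub, norm_sub_rev, div_eq_inv_mul]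

theorem nonneg_of_hasDerivAt_of_le_left {g : ℝ → ℝ} {g' c : ℝ} (hg : HasDerivAt g g' c)
    (hle : ∀ᶠ t in 𝓝[<] c, g t ≤ g c) : 0 ≤ g' := by
  refine ge_of_tendsto (hasDerivAt_iff_tendsto_slope_left_right.1 hg).1 ?_
  filter_upwards [hle, self_mem_nhdsWithin] with t ht htc
  rw [slope_def_field]
  exact div_nonneg_of_nonpos (sub_nonpos.2 ht) (sub_nonpos.2 (le_of_lt htc))

theorem norm_le_mul_exp_of_norm_deriv_le_history {E : Type*} [NormedAddCommGroup E]
    [NormedSpace ℝ E] {u F : ℝ → E} {a b M L : ℝ} (hL : 0 ≤ L) (hu : Continuous u)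
    (hF : ∀ t ∈ Ioc a b, HasDerivAt u (F t) t) (ha : ‖u a‖ ≤ M)
    (hbound : ∀ t ∈ Ioc a b, ∀ B, M ≤ B → (∀ s ∈ Icc a t, ‖u s‖ ≤ B) → ‖F t‖ ≤ L * B) :
    ∀ t ∈ Icc a b, ‖u t‖ ≤ M * Real.exp (L * (t - a)) := by
  have hM : 0 ≤ M := (norm_nonneg _).trans ha
  -- at the first contact of `‖u‖` with the barrier, the barrier's slope `(L + ε) h` beats `L h`
  have key : ∀ ε > 0, ∀ t ∈ Icc a b, ‖u t‖ < (M + ε) * Real.exp ((L + ε) * (t - a)) := by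
    intro ε hε
    set h := fun t => (M + ε) * Real.exp ((L + ε) * (t - a)) with h_def
    have hderiv : ∀ t, HasDerivAt h ((L + ε) * h t) t := fun t =>
      ((((hasDerivAt_id' t).sub_const a).const_mul (L + ε)).exp.const_mul (M + ε)).congr_deriv
        (by ring)
    have hmono : Monotone h := fun s t hst =>
      mul_le_mul_of_nonneg_left (Real.exp_le_exp.2 (by nlinarith)) (by linarith)
    by_contra! ⟨t', ht', hge⟩
    obtain ⟨c, hc, hceq, hbefore⟩ := exists_first_hit (g := fun t => ‖u t‖ - h t)
      (hu.norm.sub (by fun_prop)) ht'.1 (c := 0) (by simp [h_def]; linarith) (by simpa using hge)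
    have hbelow : ∀ s ∈ Icc a c, ‖u s‖ ≤ h s := fun s hs => by
      rcases hs.2.lt_or_eq with hsc | rfl
      · linarith [hbefore s ⟨hs.1, hsc⟩]
      · linarith
    have hFc : ‖F c‖ ≤ L * h c :=
      hbound c ⟨hc.1, hc.2.trans ht'.2⟩ (h c)
        (by linarith [hmono hc.1.le, show h a = M + ε by simp [h_def]])
        fun s hs => (hbelow s hs).trans (hmono hs.2)
    have hcomp : (L + ε) * h c ≤ ‖F c‖ := by
      refine le_norm_of_hasDerivAt_of_norm_le_left (hF c ⟨hc.1, hc.2.trans ht'.2⟩) (hderiv c)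
        ?_ (by linarith)
      filter_upwards [Ioo_mem_nhdsLT hc.1] with s hs using hbelow s ⟨hs.1.le, hs.2.le⟩
    have : 0 < h c := by positivity
    nlinarith
  intro t ht
  have hcont : Continuous fun ε => (M + ε) * Real.exp ((L + ε) * (t - a)) := by fun_prop
  refine ge_of_tendsto ((hcont.tendsto' 0 _ (by simp)).mono_left
    (nhdsWithin_le_nhds (s := Ioi 0))) ?_
  filter_upwards [self_mem_nhdsWithin] with ε hε using (key ε hε t ht).le

theorem volume_image_eq_zero_of_hasDerivWithinAt_zero {g : ℝ → ℝ} {A : Set ℝ}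
    (hg : ∀ x ∈ A, HasDerivWithinAt g 0 A x) : volume (g '' A) = 0 :=
  addHaar_image_eq_zero_of_det_fderivWithin_eq_zero volume (f' := fun _ => 0)
    (fun x hx => by simpa using (hg x hx).hasFDerivWithinAt)
    (fun _ _ => by simp [ContinuousLinearMap.det])

theorem not_Ioo_subset_image_of_hasDerivWithinAt_zero {g : ℝ → ℝ} {A : Set ℝ} {a b : ℝ}
    (hab : a < b) (hg : ∀ x ∈ A, HasDerivWithinAt g 0 A x) : ¬ Ioo a b ⊆ g '' A := fun h => by
  have := measure_mono_null h (volume_image_eq_zero_of_hasDerivWithinAt_zero hg)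
  rw [Real.volume_Ioo, ENNReal.ofReal_eq_zero] at this
  linarith

theorem norm_le_mul_of_lipschitzAt_zero {E F ι : Type*} [Fintype ι] [NormedAddCommGroup E]
    [NormedAddCommGroup F] {g : E → (ι → E) → F} {L0 B : ℝ} {Li : ι → ℝ} (hL0 : 0 ≤ L0)
    (hLi : ∀ i, 0 ≤ Li i) (hg0 : g 0 0 = 0) {x : E} {v : ι → E}
    (hg : ‖g x v - g 0 0‖ ≤ L0 * ‖x - 0‖ + ∑ i, Li i * ‖v i - 0‖) (hx : ‖x‖ ≤ B)
    (hv : ∀ i, ‖v i‖ ≤ B) : ‖g x v‖ ≤ (L0 + ∑ i, Li i) * B := by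
  simp only [hg0, sub_zero] at hg
  calc ‖g x v‖ ≤ L0 * ‖x‖ + ∑ i, Li i * ‖v i‖ := hg
    _ ≤ L0 * B + ∑ i, Li i * B := by
      gcongr with i
      exacts [hLi i, hv i]
    _ = (L0 + ∑ i, Li i) * B := by rw [add_mul, Finset.sum_mul]

section MaxDelay

variable {ι E : Type*} [NormedAddCommGroup E]

noncomputable def maxDelay (t0 : ℝ) (τ : ι → ℝ → E → ℝ) (δ : ℝ) : ℝ :=
  sSup {y : ℝ | ∃ (i : ι) (t : ℝ) (x : E), t0 ≤ t ∧ ‖x‖ ≤ δ ∧ y = τ i t x}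

structure IsDelayBound (t0 δ1 : ℝ) (τ : ι → ℝ → E → ℝ) (r : ℝ → ℝ) : Prop where
  delay_nonneg : ∀ i t x, t0 ≤ t → 0 ≤ τ i t x
  nonneg : ∀ δ ∈ Ioo 0 δ1, 0 ≤ r δ
  delay_le : ∀ δ ∈ Ioo 0 δ1, ∀ i t x, t0 ≤ t → ‖x‖ ≤ δ → τ i t x ≤ r δ
  eventually_lt : ∀ δ ∈ Ioo 0 δ1, ∀ b, r δ < b → ∀ᶠ δ' in 𝓝[>] δ, r δ' < b

variable {t0 C K δ0 δ : ℝ} {τ : ι → ℝ → E → ℝ}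

theorem le_maxDelay (hC : ∀ i t, t0 ≤ t → τ i t 0 ≤ C) (hK0 : 0 ≤ K)
    (hK : ∀ i t x y, t0 ≤ t → ‖x‖ ≤ δ0 → ‖y‖ ≤ δ0 → |τ i t x - τ i t y| ≤ K * ‖x - y‖)
    (hδ : δ ≤ δ0) {i : ι} {t : ℝ} {x : E} (ht : t0 ≤ t) (hx : ‖x‖ ≤ δ) :
    τ i t x ≤ maxDelay t0 τ δ := by
  refine le_csSup ⟨C + K * δ, ?_⟩ ⟨i, t, x, ht, hx, rfl⟩
  rintro _ ⟨j, s, y, hs, hy, rfl⟩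
  have hdiff := hK j s y 0 hs (hy.trans hδ) (by simpa using (norm_nonneg y).trans (hy.trans hδ))
  rw [sub_zero] at hdiff
  linarith [(abs_le.1 hdiff).2, hC j s hs, mul_le_mul_of_nonneg_left hy hK0]

theorem maxDelay_le_add [NormedSpace ℝ E] [Nonempty ι] (hC : ∀ i t, t0 ≤ t → τ i t 0 ≤ C)
    (hK0 : 0 ≤ K)
    (hK : ∀ i t x y, t0 ≤ t → ‖x‖ ≤ δ0 → ‖y‖ ≤ δ0 → |τ i t x - τ i t y| ≤ K * ‖x - y‖)
    {δ' : ℝ} (hδ : 0 < δ) (hδδ' : δ ≤ δ') (hδ' : δ' ≤ δ0) :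
    maxDelay t0 τ δ' ≤ maxDelay t0 τ δ + K * (δ' - δ) := by
  obtain ⟨i⟩ := ‹Nonempty ι›
  refine csSup_le ⟨_, i, t0, 0, le_rfl, by simpa using hδ.le.trans hδδ', rfl⟩ ?_
  rintro _ ⟨j, t, x, ht, hx, rfl⟩
  have hδ'0 : 0 < δ' := hδ.trans_le hδδ'
  have hq0 : 0 ≤ δ / δ' := div_nonneg hδ.le hδ'0.le
  have hq1 : δ / δ' ≤ 1 := div_le_one_of_le₀ hδδ' hδ'0.le
  have hy : ‖(δ / δ') • x‖ ≤ δ := by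
    rw [norm_smul, Real.norm_of_nonneg hq0]
    calc δ / δ' * ‖x‖ ≤ δ / δ' * δ' := by gcongr
      _ = δ := div_mul_cancel₀ _ hδ'0.ne'
  have hxy : ‖x - (δ / δ') • x‖ ≤ δ' - δ := by
    rw [show x - (δ / δ') • x = (1 - δ / δ') • x by rw [sub_smul, one_smul], norm_smul,
      Real.norm_of_nonneg (by linarith)]
    calc (1 - δ / δ') * ‖x‖ ≤ (1 - δ / δ') * δ' := by gcongr
      _ = δ' - δ := by rw [sub_mul, one_mul, div_mul_cancel₀ _ hδ'0.ne']
  have hdiff := hK j t x _ ht (hx.trans hδ') (hy.trans (hδδ'.trans hδ'))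
  have hle := le_maxDelay hC hK0 hK (hδδ'.trans hδ') (i := j) ht hy
  linarith [(abs_le.1 hdiff).2, mul_le_mul_of_nonneg_left hxy hK0]

theorem isDelayBound_maxDelay [NormedSpace ℝ E] [Fintype ι] [Nonempty ι]
    (hτ0 : ∀ i t x, t0 ≤ t → 0 ≤ τ i t x) (hC : ∀ i t, t0 ≤ t → τ i t 0 ≤ C)
    (hLip : ∀ i, ∃ K : ℝ, 0 ≤ K ∧ ∀ t (x y : E), t0 ≤ t →
      ‖x‖ ≤ δ0 → ‖y‖ ≤ δ0 → |τ i t x - τ i t y| ≤ K * ‖x - y‖)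
    {δ1 : ℝ} (hδ1 : δ1 ≤ δ0) : IsDelayBound t0 δ1 τ (maxDelay t0 τ) := by
  choose K' hK'0 hK' using hLip
  have hK0 : 0 ≤ ∑ i, K' i := Finset.sum_nonneg fun i _ => hK'0 i
  have hK : ∀ i t x y, t0 ≤ t → ‖x‖ ≤ δ0 → ‖y‖ ≤ δ0 →
      |τ i t x - τ i t y| ≤ (∑ j, K' j) * ‖x - y‖ := fun i t x y ht hx hy =>
    (hK' i t x y ht hx hy).trans (mul_le_mul_of_nonneg_right
      (Finset.single_le_sum (fun j _ => hK'0 j) (Finset.mem_univ i)) (norm_nonneg _))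
  refine ⟨hτ0, fun δ hδ => ?_, fun δ hδ _ _ _ ht hx => ?_, fun δ hδ b hb => ?_⟩
  · obtain ⟨i⟩ := ‹Nonempty ι›
    exact (hτ0 i t0 0 le_rfl).trans
      (le_maxDelay hC hK0 hK (hδ.2.le.trans hδ1) le_rfl (by simpa using hδ.1.le))
  · exact le_maxDelay hC hK0 hK (hδ.2.le.trans hδ1) ht hx
  have hlim : Tendsto (fun δ' => maxDelay t0 τ δ + (∑ i, K' i) * (δ' - δ)) (𝓝[>] δ)
      (𝓝 (maxDelay t0 τ δ)) := by
    have hcont : Continuous fun δ' => maxDelay t0 τ δ + (∑ i, K' i) * (δ' - δ) := by fun_prop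
    exact (hcont.tendsto' δ _ (by simp)).mono_left nhdsWithin_le_nhds
  filter_upwards [hlim.eventually (gt_mem_nhds hb), Ioo_mem_nhdsGT (hδ.2.trans_le hδ1),
    self_mem_nhdsWithin] with δ' hδ'b hδ' hδδ'
  exact (maxDelay_le_add hC hK0 hK hδ.1 (le_of_lt hδδ') hδ'.2.le).trans_lt hδ'b

end MaxDelay

section DDE

open scoped RealInnerProductSpace

variable {d N k : ℕ} {t0 δ1 : ℝ}
  {f : ℝ → EuclideanSpace ℝ (Fin d) → (Fin N → EuclideanSpace ℝ (Fin d)) →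
    EuclideanSpace ℝ (Fin d)}
  {τ : Fin N → ℝ → EuclideanSpace ℝ (Fin d) → ℝ} {r : ℝ → ℝ}
  {φ u : ℝ → EuclideanSpace ℝ (Fin d)}

/-- The hypothesis on the auxiliary ODE problems; the conjunction assumed of `η` is membership
in `E_{(k)}(δ, x, t)`. -/
def AuxODECondition (d N k : ℕ) (t0 : ℝ)
    (f : ℝ → EuclideanSpace ℝ (Fin d) → (Fin N → EuclideanSpace ℝ (Fin d)) →
      EuclideanSpace ℝ (Fin d))
    (τ : Fin N → ℝ → EuclideanSpace ℝ (Fin d) → ℝ) (r : ℝ → ℝ) (δ1 : ℝ) : Prop :=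
  ∀ δ : ℝ, 0 < δ → δ < δ1 → ∀ x : EuclideanSpace ℝ (Fin d), ‖x‖ = δ →
    ∀ t : ℝ, t0 + (k : ℝ) * r δ ≤ t →
    ∀ η : Fin N → ℝ → EuclideanSpace ℝ (Fin d),
      ((∀ i, ∀ θ ∈ Icc (-(r δ)) 0, ‖η i θ‖ ≤ δ) ∧
        0 ≤ ⟪x, f t x (fun i => η i 0)⟫ ∧
        ∃ φ u, ContinuousOn φ (Iic t0) ∧ IsSolDDE d N t0 f τ φ u ∧
          ∀ i, ∀ θ ∈ Icc (-(r δ)) 0, η i θ = u (t + θ - τ i (t + θ) (u (t + θ)))) →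
      ∃ I : Fin N, 0 < τ I t x ∧
        ∀ v : ℝ → EuclideanSpace ℝ (Fin d),
          (v (-(τ I t x)) = η I 0 ∧
            ∀ θ ∈ Icc (-(τ I t x)) 0,
              HasDerivWithinAt v (f (t + θ) (v θ) fun i => η i θ)
                (Icc (-(τ I t x)) 0) θ) →
          (⟪v 0, x⟫ < δ ^ 2 ∨
            (⟪v 0, x⟫ = δ ^ 2 ∧ ⟪f t (v 0) (fun i => η i 0), x⟫ ≤ 0))

namespace IsSolDDE

theorem hasDerivAt (hsol : IsSolDDE d N t0 f τ φ u) {t : ℝ} (ht : t0 < t) :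
    HasDerivAt u (f t (u t) fun i => u (t - τ i t (u t))) t :=
  (hsol.2.2 t ht.le).hasDerivAt (Ici_mem_nhds ht)

theorem norm_le_of_norm_le_history (hsol : IsSolDDE d N t0 f τ φ u) {a c B : ℝ}
    (hφ : ∀ s ∈ Icc a t0, ‖φ s‖ ≤ B) (hu : ∀ s ∈ Icc t0 c, ‖u s‖ ≤ B) :
    ∀ s ∈ Icc a c, ‖u s‖ ≤ B := by
  intro s hs
  rcases le_total s t0 with hst | hst
  · rw [hsol.2.1 s hst]
    exact hφ s ⟨hs.1, hst⟩
  · exact hu s ⟨hst, hs.2⟩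

theorem norm_le_mul_exp (hsol : IsSolDDE d N t0 f τ φ u) (hτ0 : ∀ i t x, t0 ≤ t → 0 ≤ τ i t x)
    {δ R L M t1 : ℝ} (hτR : ∀ i t x, t0 ≤ t → ‖x‖ ≤ δ → τ i t x ≤ R) (hR : 0 ≤ R)
    (hf : ∀ t, t0 ≤ t → ∀ B ≤ δ, ∀ x v, ‖x‖ ≤ B → (∀ i, ‖v i‖ ≤ B) → ‖f t x v‖ ≤ L * B)
    (hL : 0 ≤ L) (hφ : ∀ s ∈ Icc (t0 - R) t0, ‖φ s‖ ≤ M) (hMδ : M ≤ δ)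
    (hu : ∀ s ∈ Icc t0 t1, ‖u s‖ ≤ δ) :
    ∀ s ∈ Icc t0 t1, ‖u s‖ ≤ M * Real.exp (L * (s - t0)) := by
  refine norm_le_mul_exp_of_norm_deriv_le_history hL hsol.1 (fun t ht => hsol.hasDerivAt ht.1)
    (by rw [hsol.2.1 t0 le_rfl]; exact hφ t0 ⟨by linarith, le_rfl⟩) ?_
  intro c hc B hMB hB
  have hwin : ∀ s ∈ Icc (t0 - R) c, ‖u s‖ ≤ min B δ :=
    hsol.norm_le_of_norm_le_history
      (fun s hs => le_min ((hφ s hs).trans hMB) ((hφ s hs).trans hMδ))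
      (fun s hs => le_min (hB s hs) (hu s ⟨hs.1, hs.2.trans hc.2⟩))
  have hτc : ∀ i, τ i c (u c) ≤ R := fun i => hτR i c (u c) hc.1.le (hu c ⟨hc.1.le, hc.2⟩)
  calc _ ≤ L * min B δ :=
        hf c hc.1.le _ (min_le_right _ _) _ _ (hwin c ⟨by linarith [hc.1], le_rfl⟩) fun i =>
          hwin _ ⟨by linarith [hτc i, hc.1], by linarith [hτ0 i c (u c) hc.1.le]⟩
    _ ≤ L * B := by gcongr; exact min_le_left _ _

theorem add_lt_of_norm_eq (hsol : IsSolDDE d N t0 f τ φ u) (hτ0 : ∀ i t x, t0 ≤ t → 0 ≤ τ i t x)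
    {δ R L M T t1 : ℝ} (hτR : ∀ i t x, t0 ≤ t → ‖x‖ ≤ δ → τ i t x ≤ R) (hR : 0 ≤ R)
    (hf : ∀ t, t0 ≤ t → ∀ B ≤ δ, ∀ x v, ‖x‖ ≤ B → (∀ i, ‖v i‖ ≤ B) → ‖f t x v‖ ≤ L * B)
    (hL : 0 ≤ L) (hT : 0 ≤ T) (hφ : ∀ s ∈ Icc (t0 - R) t0, ‖φ s‖ ≤ M)
    (hM : M < δ * Real.exp (-(L * T))) (ht1 : t0 ≤ t1) (hu : ∀ s ∈ Icc t0 t1, ‖u s‖ ≤ δ)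
    (hut1 : ‖u t1‖ = δ) : t0 + T < t1 := by
  have hδ : 0 < δ := (mul_pos_iff_of_pos_right (Real.exp_pos _)).1
    (((norm_nonneg _).trans (hφ t0 ⟨by linarith, le_rfl⟩)).trans_lt hM)
  have hMδ : M ≤ δ := hM.le.trans
    (mul_le_of_le_one_right hδ.le (Real.exp_le_one_iff.2 (by simp only [neg_nonpos]; positivity)))
  have hgrowth : δ * 1 < δ * Real.exp (L * (t1 - t0 - T)) :=
    calc δ * 1 = ‖u t1‖ := by rw [hut1, mul_one]
      _ ≤ M * Real.exp (L * (t1 - t0)) :=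
        hsol.norm_le_mul_exp hτ0 hτR hR hf hL hφ hMδ hu t1 ⟨ht1, le_rfl⟩
      _ < δ * Real.exp (-(L * T)) * Real.exp (L * (t1 - t0)) := by gcongr
      _ = δ * Real.exp (L * (t1 - t0 - T)) := by rw [mul_assoc, ← Real.exp_add]; ring_nf
  have := pos_of_mul_pos_right (Real.one_lt_exp_iff.1 (lt_of_mul_lt_mul_left hgrowth hδ.le)) hL
  linarith

theorem inner_eq_zero_of_first_hit (Hmain : AuxODECondition d N k t0 f τ r δ1)
    (hφ : ContinuousOn φ (Iic t0)) (hsol : IsSolDDE d N t0 f τ φ u) {δ s : ℝ} (hδ : 0 < δ)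
    (hδ1 : δ < δ1) (hs : t0 + k * r δ ≤ s) (hs0 : t0 < s) (hus : ‖u s‖ = δ)
    (hleft : ∀ᶠ w in 𝓝[<] s, ‖u w‖ ≤ δ) (hdelay : ∀ i, t0 < s - τ i s (u s))
    (hhist : ∀ i, ∀ θ ∈ Icc (-r δ) 0, ‖u (s + θ - τ i (s + θ) (u (s + θ)))‖ ≤ δ) :
    ⟪u s, f s (u s) fun i => u (s - τ i s (u s))⟫ = 0 := by
  have hnonneg : 0 ≤ ⟪u s, f s (u s) fun i => u (s - τ i s (u s))⟫ := by
    have := nonneg_of_hasDerivAt_of_le_left (hsol.hasDerivAt hs0).norm_sq <| by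
      filter_upwards [hleft] with w hw
      rw [hus]
      gcongr
    linarith
  obtain ⟨I, -, hI⟩ := Hmain δ hδ hδ1 (u s) hus s hs
    (fun i θ => u (s + θ - τ i (s + θ) (u (s + θ))))
    ⟨hhist, by simpa using hnonneg, φ, u, hφ, hsol, fun _ _ _ => rfl⟩
  have hv := hI (fun θ => u (s + θ)) ⟨by simp [sub_eq_add_neg], fun θ hθ =>
    ((hsol.hasDerivAt (by linarith [hθ.1, hdelay I])).comp_const_add s θ).hasDerivWithinAt⟩
  simp only [add_zero, real_inner_self_eq_norm_sq, hus, lt_irrefl, false_or] at hv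
  rw [real_inner_comm] at hv
  linarith [hv.2]

theorem inner_eq_zero_of_first_hit_above (Hmain : AuxODECondition d N k t0 f τ r δ1)
    (hr : IsDelayBound t0 δ1 τ r) (hk : 1 ≤ k) (hφ : ContinuousOn φ (Iic t0))
    (hsol : IsSolDDE d N t0 f τ φ u) {δ δ' M t1 s : ℝ} (hδ : 0 < δ) (hδδ' : δ < δ')
    (hδ' : δ' < δ1) (hφM : ∀ σ ∈ Icc (t0 - r δ) t0, ‖φ σ‖ ≤ M) (hMδ : M ≤ δ)
    (ht1 : ∀ w ∈ Ico t0 t1, ‖u w‖ < δ) (hkt1 : t0 + k * r δ' < t1) (hs0 : t0 < s)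
    (hus : ‖u s‖ = δ') (hbefore : ∀ w ∈ Ico t0 s, ‖u w‖ < δ') :
    ⟪u s, f s (u s) fun i => u (s - τ i s (u s))⟫ = 0 := by
  have hδ'mem : δ' ∈ Ioo 0 δ1 := ⟨hδ.trans hδδ', hδ'⟩
  have hrk : r δ' ≤ k * r δ' :=
    le_mul_of_one_le_left (hr.nonneg δ' hδ'mem) (by exact_mod_cast hk)
  have ht1s : t1 ≤ s := not_lt.1 fun h => (ht1 s ⟨hs0.le, h⟩).not_ge (hus ▸ hδδ'.le)
  have hle : ∀ w ∈ Icc t0 s, ‖u w‖ ≤ δ' := fun w hw =>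
    hw.2.lt_or_eq.elim (fun h => (hbefore w ⟨hw.1, h⟩).le) fun h => h ▸ hus.le
  have hwin : ∀ σ ∈ Icc (t0 - r δ) s, ‖u σ‖ ≤ δ' :=
    hsol.norm_le_of_norm_le_history (fun σ hσ => (hφM σ hσ).trans (hMδ.trans hδδ'.le)) hle
  refine inner_eq_zero_of_first_hit Hmain hφ hsol hδ'mem.1 hδ' (by linarith) hs0 hus ?_ ?_ ?_
  · filter_upwards [Ioo_mem_nhdsLT hs0] with w hw using (hbefore w ⟨hw.1.le, hw.2⟩).le
  · intro i
    linarith [hr.delay_le δ' hδ'mem i s (u s) hs0.le hus.le]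
  · intro i θ hθ
    have hw : t0 ≤ s + θ := by linarith [hθ.1]
    refine hwin _ ⟨?_, by linarith [hθ.2, hr.delay_nonneg i (s + θ) (u (s + θ)) hw]⟩
    -- the delayed argument reaches back at most `r δ` while `‖u‖ ≤ δ`, and stays past `t0` later
    rcases le_or_gt ‖u (s + θ)‖ δ with hsmall | hbig
    · linarith [hr.delay_le δ ⟨hδ, hδδ'.trans hδ'⟩ i _ _ hw hsmall]
    · have : t1 ≤ s + θ := not_lt.1 fun h => (ht1 _ ⟨hw, h⟩).not_gt hbig
      linarith [hr.delay_le δ' hδ'mem i _ _ hw (hle _ ⟨hw, by linarith [hθ.2]⟩),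
        hr.nonneg δ ⟨hδ, hδδ'.trans hδ'⟩]

theorem norm_le_of_norm_initial_lt (Hmain : AuxODECondition d N k t0 f τ r δ1)
    (hr : IsDelayBound t0 δ1 τ r) (hk : 1 ≤ k) {δ L : ℝ}
    (hf : ∀ t, t0 ≤ t → ∀ B ≤ δ, ∀ x v, ‖x‖ ≤ B → (∀ i, ‖v i‖ ≤ B) → ‖f t x v‖ ≤ L * B)
    (hL : 0 ≤ L) (hφ : ContinuousOn φ (Iic t0)) (hsol : IsSolDDE d N t0 f τ φ u) (hδ : 0 < δ)
    (hδ1 : δ < δ1) (hsmall : ∀ s ∈ Icc (t0 - r δ) t0, ‖φ s‖ < δ * Real.exp (-(L * (k * r δ)))) :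
    ∀ t ≥ t0, ‖u t‖ ≤ δ := by
  intro t ht
  by_contra! hut
  have hR := hr.nonneg δ ⟨hδ, hδ1⟩
  have hkR : 0 ≤ (k : ℝ) * r δ := by positivity
  obtain ⟨σ, hσ, hmax⟩ := (isCompact_Icc (a := t0 - r δ) (b := t0)).exists_isMaxOn
    (nonempty_Icc.2 (by linarith)) (hφ.norm.mono Icc_subset_Iic_self)
  have hφM : ∀ s ∈ Icc (t0 - r δ) t0, ‖φ s‖ ≤ ‖φ σ‖ := fun s hs => hmax hs
  have hMδ : ‖φ σ‖ < δ := (hsmall σ hσ).trans_le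
    (mul_le_of_le_one_right hδ.le (Real.exp_le_one_iff.2 (by simp only [neg_nonpos]; positivity)))
  have hut0 : ‖u t0‖ < δ := by
    rw [hsol.2.1 t0 le_rfl]
    exact (hφM t0 ⟨by linarith, le_rfl⟩).trans_lt hMδ
  obtain ⟨t1, ht1, hut1, hbefore⟩ := exists_first_hit hsol.1.norm ht hut0 hut.le
  have hkt1 : t0 + k * r δ < t1 :=
    hsol.add_lt_of_norm_eq hr.delay_nonneg (hr.delay_le δ ⟨hδ, hδ1⟩) hR hf hL hkR hφM (hsmall σ hσ)
      ht1.1.le (fun s hs => hs.2.lt_or_eq.elim (fun h => (hbefore s ⟨hs.1, h⟩).le)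
        fun h => h ▸ hut1.le) hut1
  have hk0 : (0 : ℝ) < k := by exact_mod_cast hk
  obtain ⟨C, hδC, hC⟩ := mem_nhdsGT_iff_exists_Ioc_subset.1 <|
    (hr.eventually_lt δ ⟨hδ, hδ1⟩ ((t1 - t0) / k) ((lt_div_iff₀' hk0).2 (by linarith))).and
      (Ioo_mem_nhdsGT (lt_min hδ1 hut))
  refine not_Ioo_subset_image_of_hasDerivWithinAt_zero (g := fun s => ‖u s‖ ^ 2)
    (A := {s | t0 < s ∧ ⟪u s, f s (u s) fun i => u (s - τ i s (u s))⟫ = 0})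
    (pow_lt_pow_left₀ hδC hδ.le two_ne_zero) (fun s hs => ?_) fun c hc => ?_
  · simpa [hs.2] using ((hsol.hasDerivAt hs.1).norm_sq).hasDerivWithinAt
  have hc0 : 0 ≤ c := (sq_nonneg δ).trans hc.1.le
  have hδ' : √c ∈ Ioc δ C := ⟨(Real.lt_sqrt hδ.le).2 hc.1,
    ((Real.sqrt_lt' (hδ.trans hδC)).2 hc.2).le⟩
  obtain ⟨hrδ', hδ'δ1, hδ'ut⟩ : r √c < (t1 - t0) / k ∧ √c < δ1 ∧ √c < ‖u t‖ :=
    ⟨(hC hδ').1, lt_min_iff.1 (hC hδ').2.2⟩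
  obtain ⟨s, hs, hus, hbefore'⟩ := exists_first_hit hsol.1.norm ht (hut0.trans hδ'.1) hδ'ut.le
  refine ⟨s, ⟨hs.1, inner_eq_zero_of_first_hit_above Hmain hr hk hφ hsol hδ hδ'.1 hδ'δ1 hφM
    hMδ.le hbefore (by linarith [(lt_div_iff₀' hk0).1 hrδ']) hs.1 hus
    hbefore'⟩, by simp [hus, Real.sq_sqrt hc0]⟩

end IsSolDDE

end DDE

theorem stmt_2_general
    (d N k : ℕ) (hk : 1 ≤ k) (t0 : ℝ)
    (f : ℝ → EuclideanSpace ℝ (Fin d) → (Fin N → EuclideanSpace ℝ (Fin d)) →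
      EuclideanSpace ℝ (Fin d))
    (τ : Fin N → ℝ → EuclideanSpace ℝ (Fin d) → ℝ)
    (hf0 : ∀ t, t0 ≤ t → f t 0 0 = 0)
    (hτ0 : ∀ i t x, t0 ≤ t → 0 ≤ τ i t x)
    (τmax : ℝ)
    (hτmax : IsLUB {y : ℝ | ∃ i t, t0 ≤ t ∧ y = τ i t 0} τmax)
    (L0 : ℝ) (Li : Fin N → ℝ) (δ0 L : ℝ)
    (hL0 : 0 < L0) (hLi : ∀ i, 0 < Li i)
    (hLdef : L = L0 + ∑ i, Li i)
    (hLip : ∀ t, t0 ≤ t → ∀ (x x' : EuclideanSpace ℝ (Fin d))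
      (v v' : Fin N → EuclideanSpace ℝ (Fin d)),
      ‖x‖ ≤ δ0 → ‖x'‖ ≤ δ0 → (∀ i, ‖v i‖ ≤ δ0) → (∀ i, ‖v' i‖ ≤ δ0) →
      ‖f t x v - f t x' v'‖ ≤ L0 * ‖x - x'‖ + ∑ i, Li i * ‖v i - v' i‖)
    (hτLip : ∀ i, ∃ K : ℝ, 0 ≤ K ∧ ∀ t (x y : EuclideanSpace ℝ (Fin d)), t0 ≤ t →
      ‖x‖ ≤ δ0 → ‖y‖ ≤ δ0 → |τ i t x - τ i t y| ≤ K * ‖x - y‖)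
    -- r(δ) = sup of the delays over t ≥ t0 and ‖u‖ ≤ δ
    (r : ℝ → ℝ)
    (hr : ∀ δ, r δ =
      sSup {y : ℝ | ∃ (i : Fin N) (t : ℝ) (x : EuclideanSpace ℝ (Fin d)), t0 ≤ t ∧ ‖x‖ ≤ δ ∧ y = τ i t x})
    (δ1 : ℝ) (hδ1a : 0 < δ1) (hδ1b : δ1 ≤ δ0)
    -- main hypothesis: for every δ ∈ (0,δ1), |x| = δ, t ≥ t0 + k r(δ) and
    -- (η₁,…,η_N) ∈ E_{(k)}(δ,x,t), there is I with τ_I(t,x) > 0 such that every solution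
    -- of the auxiliary ODE satisfies (2.5) or (2.6)
    (Hmain : ∀ δ : ℝ, 0 < δ → δ < δ1 → ∀ x : EuclideanSpace ℝ (Fin d), ‖x‖ = δ →
      ∀ t : ℝ, t0 + (k : ℝ) * r δ ≤ t →
      ∀ η : Fin N → ℝ → EuclideanSpace ℝ (Fin d),
        ((∀ i, ∀ θ ∈ Icc (-(r δ)) 0, ‖η i θ‖ ≤ δ) ∧
          0 ≤ ⟪x, f t x (fun i => η i 0)⟫ ∧
          ∃ φ u, ContinuousOn φ (Iic t0) ∧ IsSolDDE d N t0 f τ φ u ∧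
            ∀ i, ∀ θ ∈ Icc (-(r δ)) 0, η i θ = u (t + θ - τ i (t + θ) (u (t + θ)))) →
        ∃ I : Fin N, 0 < τ I t x ∧
          ∀ v : ℝ → EuclideanSpace ℝ (Fin d),
            (v (-(τ I t x)) = η I 0 ∧
              ∀ θ ∈ Icc (-(τ I t x)) 0,
                HasDerivWithinAt v (f (t + θ) (v θ) fun i => η i θ)
                  (Icc (-(τ I t x)) 0) θ) →
            (⟪v 0, x⟫ < δ ^ 2 ∨
              (⟪v 0, x⟫ = δ ^ 2 ∧ ⟪f t (v 0) (fun i => η i 0), x⟫ ≤ 0))) :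
    -- conclusion: Lyapunov stability of the zero solution, and the quantitative bound
    (∀ ε > (0 : ℝ), ∃ ρ > (0 : ℝ), ∀ φ u, ContinuousOn φ (Iic t0) →
      IsSolDDE d N t0 f τ φ u → (∀ s ≤ t0, ‖φ s‖ < ρ) → ∀ t ≥ t0, ‖u t‖ ≤ ε) ∧
    (∀ δ : ℝ, 0 < δ → δ < δ1 →
      ∀ φ u, ContinuousOn φ (Iic t0) → IsSolDDE d N t0 f τ φ u →
        (∀ s ∈ Icc (t0 - r δ) t0, ‖φ s‖ < δ * Real.exp (-(L * ((k : ℝ) * r δ)))) →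
        ∀ t ≥ t0, ‖u t‖ ≤ δ) := by
  have : Nonempty (Fin N) := let ⟨_, i, _⟩ := hτmax.nonempty; ⟨i⟩
  have hdelay : IsDelayBound t0 δ1 τ r := (funext hr : r = maxDelay t0 τ) ▸
    isDelayBound_maxDelay hτ0 (fun i t ht => hτmax.1 ⟨i, t, ht, rfl⟩) hτLip hδ1b
  have hL : 0 ≤ L := hLdef ▸ add_nonneg hL0.le (Finset.sum_nonneg fun i _ => (hLi i).le)
  have hgrowth : ∀ δ < δ1, ∀ t, t0 ≤ t → ∀ B ≤ δ, ∀ x v, ‖x‖ ≤ B → (∀ i, ‖v i‖ ≤ B) →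
      ‖f t x v‖ ≤ L * B := fun δ hδ1 t ht B hB x v hx hv => by
    have hBδ0 : B ≤ δ0 := hB.trans (hδ1.le.trans hδ1b)
    have h0 : ‖(0 : EuclideanSpace ℝ (Fin d))‖ ≤ δ0 := by simpa using hδ1a.le.trans hδ1b
    exact hLdef ▸ norm_le_mul_of_lipschitzAt_zero hL0.le (fun i => (hLi i).le) (hf0 t ht)
      (hLip t ht x 0 v 0 (hx.trans hBδ0) h0 (fun i => (hv i).trans hBδ0) fun _ => h0) hx hv
  refine ⟨fun ε hε => ?_, fun δ hδ hδ1 φ u hφ hsol =>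
    hsol.norm_le_of_norm_initial_lt Hmain hdelay hk (hgrowth δ hδ1) hL hφ hδ hδ1⟩
  obtain ⟨δ, hδ, hδε, hδ1⟩ : ∃ δ, 0 < δ ∧ δ ≤ ε ∧ δ < δ1 :=
    ⟨min ε δ1 / 2, half_pos (lt_min hε hδ1a), by linarith [min_le_left ε δ1, lt_min hε hδ1a],
      by linarith [min_le_right ε δ1, lt_min hε hδ1a]⟩
  exact ⟨δ * Real.exp (-(L * (k * r δ))), mul_pos hδ (Real.exp_pos _),
    fun φ u hφ hsol hsmall t ht => (hsol.norm_le_of_norm_initial_lt Hmain hdelay hk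
      (hgrowth δ hδ1) hL hφ hδ hδ1 (fun s hs => hsmall s hs.2) t ht).trans hδε⟩

/-- Theorem 2.4 of Humphries–Magpantay: Lyapunov stability of the zero
solution of a nonautonomous state-dependent DDE via the auxiliary ODE problems. -/
theorem stmt_2
    (d N k : ℕ) (hd : 1 ≤ d) (hN : 1 ≤ N) (hk : 1 ≤ k) (t0 : ℝ)
    (f : ℝ → EuclideanSpace ℝ (Fin d) → (Fin N → EuclideanSpace ℝ (Fin d)) →
      EuclideanSpace ℝ (Fin d))
    (τ : Fin N → ℝ → EuclideanSpace ℝ (Fin d) → ℝ)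
    (hfcont : Continuous fun p : ℝ × EuclideanSpace ℝ (Fin d) ×
      (Fin N → EuclideanSpace ℝ (Fin d)) => f p.1 p.2.1 p.2.2)
    (hτcont : ∀ i, Continuous fun p : ℝ × EuclideanSpace ℝ (Fin d) => τ i p.1 p.2)
    (hf0 : ∀ t, t0 ≤ t → f t 0 0 = 0)
    (hτ0 : ∀ i t x, t0 ≤ t → 0 ≤ τ i t x)
    (τmax : ℝ) (hτmaxpos : 0 < τmax)
    (hτmax : IsLUB {y : ℝ | ∃ i t, t0 ≤ t ∧ y = τ i t 0} τmax)
    (L0 : ℝ) (Li : Fin N → ℝ) (δ0 L : ℝ)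
    (hL0 : 0 < L0) (hLi : ∀ i, 0 < Li i) (hδ0 : 0 < δ0)
    (hLdef : L = L0 + ∑ i, Li i)
    (hLip : ∀ t, t0 ≤ t → ∀ (x x' : EuclideanSpace ℝ (Fin d))
      (v v' : Fin N → EuclideanSpace ℝ (Fin d)),
      ‖x‖ ≤ δ0 → ‖x'‖ ≤ δ0 → (∀ i, ‖v i‖ ≤ δ0) → (∀ i, ‖v' i‖ ≤ δ0) →
      ‖f t x v - f t x' v'‖ ≤ L0 * ‖x - x'‖ + ∑ i, Li i * ‖v i - v' i‖)
    (hτLip : ∀ i, ∃ K : ℝ, 0 ≤ K ∧ ∀ t (x y : EuclideanSpace ℝ (Fin d)), t0 ≤ t →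
      ‖x‖ ≤ δ0 → ‖y‖ ≤ δ0 → |τ i t x - τ i t y| ≤ K * ‖x - y‖)
    -- r(δ) = sup of the delays over t ≥ t0 and ‖u‖ ≤ δ
    (r : ℝ → ℝ)
    (hr : ∀ δ, r δ =
      sSup {y : ℝ | ∃ (i : Fin N) (t : ℝ) (x : EuclideanSpace ℝ (Fin d)), t0 ≤ t ∧ ‖x‖ ≤ δ ∧ y = τ i t x})
    (δ1 : ℝ) (hδ1a : 0 < δ1) (hδ1b : δ1 ≤ δ0)
    -- main hypothesis: for every δ ∈ (0,δ1), |x| = δ, t ≥ t0 + k r(δ) and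
    -- (η₁,…,η_N) ∈ E_{(k)}(δ,x,t), there is I with τ_I(t,x) > 0 such that every solution
    -- of the auxiliary ODE satisfies (2.5) or (2.6)
    (Hmain : ∀ δ : ℝ, 0 < δ → δ < δ1 → ∀ x : EuclideanSpace ℝ (Fin d), ‖x‖ = δ →
      ∀ t : ℝ, t0 + (k : ℝ) * r δ ≤ t →
      ∀ η : Fin N → ℝ → EuclideanSpace ℝ (Fin d),
        ((∀ i, ∀ θ ∈ Icc (-(r δ)) 0, ‖η i θ‖ ≤ δ) ∧
          0 ≤ ⟪x, f t x (fun i => η i 0)⟫ ∧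
          ∃ φ u, ContinuousOn φ (Iic t0) ∧ IsSolDDE d N t0 f τ φ u ∧
            ∀ i, ∀ θ ∈ Icc (-(r δ)) 0, η i θ = u (t + θ - τ i (t + θ) (u (t + θ)))) →
        ∃ I : Fin N, 0 < τ I t x ∧
          ∀ v : ℝ → EuclideanSpace ℝ (Fin d),
            (v (-(τ I t x)) = η I 0 ∧
              ∀ θ ∈ Icc (-(τ I t x)) 0,
                HasDerivWithinAt v (f (t + θ) (v θ) fun i => η i θ)
                  (Icc (-(τ I t x)) 0) θ) →
            (⟪v 0, x⟫ < δ ^ 2 ∨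
              (⟪v 0, x⟫ = δ ^ 2 ∧ ⟪f t (v 0) (fun i => η i 0), x⟫ ≤ 0))) :
    -- conclusion: Lyapunov stability of the zero solution, and the quantitative bound
    (∀ ε > (0 : ℝ), ∃ ρ > (0 : ℝ), ∀ φ u, ContinuousOn φ (Iic t0) →
      IsSolDDE d N t0 f τ φ u → (∀ s ≤ t0, ‖φ s‖ < ρ) → ∀ t ≥ t0, ‖u t‖ ≤ ε) ∧
    (∀ δ : ℝ, 0 < δ → δ < δ1 →
      ∀ φ u, ContinuousOn φ (Iic t0) → IsSolDDE d N t0 f τ φ u →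
        (∀ s ∈ Icc (t0 - r δ) t0, ‖φ s‖ < δ * Real.exp (-(L * ((k : ℝ) * r δ)))) →
        ∀ t ≥ t0, ‖u t‖ ≤ δ) :=
  stmt_2_general d N k hk t0 f τ hf0 hτ0 τmax hτmax L0 Li δ0 L hL0 hLi hLdef hLip hτLip r hr δ1 hδ1a
    hδ1b Hmain
end

section
/- Let c ≠ 0, a > 0, and μ + σ < 0. Suppose u is continuous on ℝ, continuously differentiable on [0,∞), solves the model DDE for all t ≥ 0, and the initial function satisfies c φ(0) ≥ −a. Then t − a − c u(t) < t for all t > 0; that is, a + c u(t) > 0 for all t > 0. -/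
/-- A solution of the model state-dependent DDE
`u'(t) = μ u(t) + σ u(t - a - c u(t))` for `t ≥ 0`, with initial function `φ` on `(-∞,0]`. -/
def IsModelSolution (μ σ c a : ℝ) (φ u : ℝ → ℝ) : Prop :=
  Continuous u ∧ (∀ t ≤ (0 : ℝ), u t = φ t) ∧
    ∀ t, (0 : ℝ) ≤ t →
      HasDerivWithinAt u (μ * u t + σ * u (t - a - c * u t)) (Set.Ici (0 : ℝ)) t

/-!
Write `τ(t) = a + c u(t)` for the delay. At a zero `s` of `τ` the deviating argument
`s - τ(s)` is `s` itself, so there the equation reads `u' = (μ + σ) u` with `c u(s) = -a`,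
and hence `τ'(s) = -a (μ + σ) > 0`. A continuous function that starts nonnegative and crosses
every zero with positive slope can neither become negative (at the last zero before it would, it
increases) nor vanish again (just before such a zero it would already be negative).
-/

open Set Filter Topology

section LocalSign

variable {f : ℝ → ℝ} {f' x : ℝ}

theorem HasDerivWithinAt.eventually_pos_right_of_eq_zero (hf : HasDerivWithinAt f f' (Ioi x) x)
    (hf' : 0 < f') (hfx : f x = 0) : ∀ᶠ y in 𝓝[>] x, 0 < f y := by
  have hslope := (hasDerivWithinAt_iff_tendsto_slope' self_notMem_Ioi).mp hf
  filter_upwards [hslope.eventually (eventually_gt_nhds hf'), self_mem_nhdsWithin]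
    with y hy hxy
  exact pos_of_slope_pos hxy hy hfx

theorem HasDerivWithinAt.eventually_neg_left_of_eq_zero (hf : HasDerivWithinAt f f' (Iio x) x)
    (hf' : 0 < f') (hfx : f x = 0) : ∀ᶠ y in 𝓝[<] x, f y < 0 := by
  have hslope := (hasDerivWithinAt_iff_tendsto_slope' self_notMem_Iio).mp hf
  filter_upwards [hslope.eventually (eventually_gt_nhds hf'), self_mem_nhdsWithin]
    with y hy hyx
  exact neg_of_slope_pos hyx hy hfx

end LocalSign

section Crossing

variable {g : ℝ → ℝ} {x₀ : ℝ}

theorem nonneg_of_eventually_pos_right_of_eq_zero (hg : Continuous g) (h₀ : 0 ≤ g x₀)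
    (hzero : ∀ s, x₀ ≤ s → g s = 0 → ∀ᶠ y in 𝓝[>] s, 0 < g y) {t : ℝ} (ht : x₀ ≤ t) :
    0 ≤ g t := by
  have hclosed : IsClosed {y | 0 ≤ g y} := isClosed_le continuous_const hg
  refine (hclosed.inter isClosed_Icc).Icc_subset_of_forall_mem_nhdsWithin h₀ ?_ ⟨ht, le_rfl⟩
  rintro s ⟨hs, hx₀s, -⟩
  rcases (show 0 ≤ g s from hs).eq_or_lt with hgs | hgs
  · exact (hzero s hx₀s hgs.symm).mono fun y hy => hy.le
  · exact ((hg.continuousAt.eventually (lt_mem_nhds hgs)).filter_mono nhdsWithin_le_nhds).mono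
      fun y hy => hy.le

theorem pos_of_hasDerivWithinAt_pos_of_eq_zero (hg : Continuous g) (h₀ : 0 ≤ g x₀)
    (hzero : ∀ s, x₀ ≤ s → g s = 0 → ∃ d > 0, HasDerivWithinAt g d (Ici x₀) s)
    {t : ℝ} (ht : x₀ < t) : 0 < g t := by
  have hnonneg : ∀ s, x₀ ≤ s → 0 ≤ g s := fun s hs =>
    nonneg_of_eventually_pos_right_of_eq_zero hg h₀ (fun s hs hgs => by
      obtain ⟨d, hd, hder⟩ := hzero s hs hgs
      exact (hder.mono (Ioi_subset_Ici hs)).eventually_pos_right_of_eq_zero hd hgs) hs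
  refine (hnonneg t ht.le).lt_of_ne' fun hgt => ?_
  obtain ⟨d, hd, hder⟩ := hzero t ht.le hgt
  have hleft := (hder.hasDerivAt (Ici_mem_nhds ht)).hasDerivWithinAt.eventually_neg_left_of_eq_zero
    hd hgt
  obtain ⟨y, hgy, hy⟩ := (hleft.and (Ioo_mem_nhdsLT ht)).exists
  exact (hnonneg y hy.1.le).not_gt hgy

end Crossing

theorem IsModelSolution.hasDerivWithinAt_delay_of_delay_eq_zero {μ σ c a : ℝ} {φ u : ℝ → ℝ}
    (hsol : IsModelSolution μ σ c a φ u) {s : ℝ} (hs : 0 ≤ s) (hτ : a + c * u s = 0) :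
    HasDerivWithinAt (fun t => a + c * u t) (-a * (μ + σ)) (Ici 0) s := by
  have hlag : s - a - c * u s = s := by linarith
  refine (((hsol.2.2 s hs).const_mul c).const_add a).congr_deriv ?_
  rw [hlag]
  linear_combination (μ + σ) * hτ

theorem stmt_4_general (μ σ c a : ℝ) (ha : 0 < a) (hμσ : μ + σ < 0)
    (φ u : ℝ → ℝ) (hsol : IsModelSolution μ σ c a φ u)
    (hφ0 : -a ≤ c * φ 0) :
    ∀ t > (0 : ℝ), t - a - c * u t < t := by
  intro t ht
  have hτ₀ : 0 ≤ a + c * u 0 := by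
    rw [hsol.2.1 0 le_rfl]
    linarith
  have hτ : 0 < a + c * u t :=
    pos_of_hasDerivWithinAt_pos_of_eq_zero (g := fun s => a + c * u s)
      (continuous_const.add (continuous_const.mul hsol.1)) hτ₀
      (fun s hs hτs => ⟨-a * (μ + σ), by nlinarith,
        hsol.hasDerivWithinAt_delay_of_delay_eq_zero hs hτs⟩) ht
  linarith

/-- Lemma 3.1 of Humphries–Magpantay: the deviating argument is a delay. -/
theorem stmt_4 (μ σ c a : ℝ) (hc : c ≠ 0) (ha : 0 < a) (hμσ : μ + σ < 0)
    (φ u : ℝ → ℝ) (hsol : IsModelSolution μ σ c a φ u)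
    (hφ0 : -a ≤ c * φ 0) :
    ∀ t > (0 : ℝ), t - a - c * u t < t :=
  stmt_4_general μ σ c a ha hμσ φ u hsol hφ0
end

section
/- Let c > 0, a > 0, 0 ≤ μ and μ + σ < 0 with σ < −μ, and let φ be continuous with φ(t) ≥ −a/c for all t ≤ 0. Then any solution u of the model DDE on [0,∞) satisfies u(t) > −a/c for all t > 0; moreover, if μ > 0, then u(t) ≤ (φ(0) − N0) e^{μ t} + N0 for all t ≥ 0, where N0 = aσ/(cμ). In particular no solution becomes unbounded in finite time. -/
/-!
On the level `u = -a/c` the state-dependent delay `a + c u` vanishes, so there the equation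
reads `u' = (μ + σ) u > 0`: a solution can reach `-a/c` only while increasing, hence never
crosses it, and at `t > 0` it cannot even touch it, since a global minimum would force `u' = 0`.
Given `u ≥ -a/c` and `σ < 0`, the delayed term is at most `-σ a / c = -μ N₀`, so
`(u - N₀) e^{-μ t}` is nonincreasing, which is the exponential bound.
-/

open Set Filter

theorem le_of_hasDerivWithinAt_pos_of_eq {f f' : ℝ → ℝ} {a L : ℝ}
    (hf : ContinuousOn f (Ici a)) (hf' : ∀ x ∈ Ici a, HasDerivWithinAt f (f' x) (Ici x) x)
    (ha : L ≤ f a) (hL : ∀ x ∈ Ici a, f x = L → 0 < f' x) : ∀ x ∈ Ici a, L ≤ f x := by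
  intro x hx
  exact image_le_of_deriv_right_lt_deriv_boundary' (f := fun _ => L) (f' := fun _ => 0)
    continuousOn_const (fun y _ => hasDerivWithinAt_const y _ L) ha
    (hf.mono Icc_subset_Ici_self) (fun y hy => hf' y hy.1)
    (fun y hy hyL => hL y hy.1 hyL.symm) ⟨hx, le_rfl⟩

theorem lt_of_forall_le_of_hasDerivAt {f : ℝ → ℝ} {L d t : ℝ} (hle : ∀ y, L ≤ f y)
    (hf : HasDerivAt f d t) (hd : f t = L → d ≠ 0) : L < f t :=
  (hle t).lt_of_ne fun h => hd h.symm <|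
    IsLocalMin.hasDerivAt_eq_zero (Eventually.of_forall fun y => h ▸ hle y) hf

namespace IsModelSolution

variable {μ σ c a : ℝ} {φ u : ℝ → ℝ}

theorem hasDerivAt (hsol : IsModelSolution μ σ c a φ u) {t : ℝ} (ht : 0 < t) :
    HasDerivAt u (μ * u t + σ * u (t - a - c * u t)) t :=
  (hsol.2.2 t ht.le).hasDerivAt (Ici_mem_nhds ht)

theorem deriv_pos_of_eq_neg_div (hc : 0 < c) (ha : 0 < a) (hμσ : μ + σ < 0) {t : ℝ}
    (ht : u t = -a / c) : 0 < μ * u t + σ * u (t - a - c * u t) := by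
  have hdelay : t - a - c * u t = t := by rw [ht]; field_simp; ring
  rw [hdelay, ht, ← add_mul]
  exact mul_pos_of_neg_of_neg hμσ (div_neg_of_neg_of_pos (neg_neg_of_pos ha) hc)

theorem neg_div_le (hsol : IsModelSolution μ σ c a φ u) (hc : 0 < c) (ha : 0 < a)
    (hμσ : μ + σ < 0) (hφ : ∀ t ≤ (0 : ℝ), -a / c ≤ φ t) (t : ℝ) : -a / c ≤ u t := by
  obtain ⟨hu, hinit, hderiv⟩ := hsol
  rcases le_or_gt t 0 with ht | ht
  · exact hinit t ht ▸ hφ t ht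
  exact le_of_hasDerivWithinAt_pos_of_eq hu.continuousOn
    (fun x hx => (hderiv x hx).mono (Ici_subset_Ici.2 hx)) (hinit 0 le_rfl ▸ hφ 0 le_rfl)
    (fun _ _ hx => deriv_pos_of_eq_neg_div hc ha hμσ hx) t ht.le

theorem neg_div_lt (hsol : IsModelSolution μ σ c a φ u) (hc : 0 < c) (ha : 0 < a)
    (hμσ : μ + σ < 0) (hφ : ∀ t ≤ (0 : ℝ), -a / c ≤ φ t) {t : ℝ} (ht : 0 < t) :
    -a / c < u t :=
  lt_of_forall_le_of_hasDerivAt (hsol.neg_div_le hc ha hμσ hφ) (hsol.hasDerivAt ht)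
    fun h => (deriv_pos_of_eq_neg_div hc ha hμσ h).ne'

theorem le_exp_mul_add (hsol : IsModelSolution μ σ c a φ u) {L N : ℝ} (hσ : σ ≤ 0)
    (hL : ∀ t, L ≤ u t) (hN : μ * N + σ * L = 0) {t : ℝ} (ht : 0 ≤ t) :
    u t ≤ (u 0 - N) * Real.exp (μ * t) + N := by
  set g : ℝ → ℝ := fun x => (u x - N) * Real.exp (-μ * x)
  have hg' : ∀ x, 0 < x → HasDerivAt g
      ((μ * u x + σ * u (x - a - c * u x)) * Real.exp (-μ * x)
        + (u x - N) * (Real.exp (-μ * x) * (-μ * 1))) x := fun x hx =>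
    ((hsol.hasDerivAt hx).sub_const N).mul ((hasDerivAt_id x).const_mul (-μ)).exp
  have hanti : AntitoneOn g (Ici 0) := by
    refine antitoneOn_of_hasDerivWithinAt_nonpos (convex_Ici 0)
      ((hsol.1.sub continuous_const).mul (by fun_prop)).continuousOn
      (fun x hx => (hg' x (by simpa using hx)).hasDerivWithinAt) fun x _ => ?_
    have hdelay : σ * u (x - a - c * u x) ≤ σ * L := mul_le_mul_of_nonpos_left (hL _) hσ
    calc _ = Real.exp (-μ * x) * (σ * u (x - a - c * u x) - σ * L) := by
          linear_combination Real.exp (-μ * x) * hN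
      _ ≤ 0 := mul_nonpos_of_nonneg_of_nonpos (Real.exp_pos _).le (sub_nonpos.2 hdelay)
  have hgt : g t ≤ g 0 := hanti (mem_Ici.2 le_rfl) (mem_Ici.2 ht) ht
  have hexp : Real.exp (-μ * t) * Real.exp (μ * t) = 1 := by
    rw [← Real.exp_add]; simp
  simp only [g, mul_zero, Real.exp_zero, mul_one] at hgt
  have := mul_le_mul_of_nonneg_right hgt (Real.exp_pos (μ * t)).le
  rw [mul_assoc, hexp, mul_one] at this
  linarith

end IsModelSolution

theorem stmt_6_general (μ σ c a : ℝ) (hc : 0 < c) (ha : 0 < a)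
    (hμσ : μ + σ < 0)
    (φ : ℝ → ℝ)
    (hφ : ∀ t ≤ (0 : ℝ), -a / c ≤ φ t)
    (u : ℝ → ℝ) (hsol : IsModelSolution μ σ c a φ u) :
    (∀ t > (0 : ℝ), -a / c < u t) ∧
    (0 < μ → ∀ t ≥ (0 : ℝ),
      u t ≤ (φ 0 - a * σ / (c * μ)) * Real.exp (μ * t) + a * σ / (c * μ)) ∧
    (∀ T > (0 : ℝ), ∃ C : ℝ, ∀ t ∈ Set.Icc (0 : ℝ) T, |u t| ≤ C) := by
  refine ⟨fun t ht => hsol.neg_div_lt hc ha hμσ hφ ht, fun hμ t ht => ?_, fun T _ => ?_⟩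
  · have hN : μ * (a * σ / (c * μ)) + σ * (-a / c) = 0 := by field_simp; ring
    simpa only [hsol.2.1 0 le_rfl] using
      hsol.le_exp_mul_add (by linarith) (hsol.neg_div_le hc ha hμσ hφ) hN ht
  · obtain ⟨C, hC⟩ := isCompact_Icc.exists_bound_of_continuousOn hsol.1.continuousOn
    exact ⟨C, hC⟩

/-- part of Theorem 3.3 of Humphries–Magpantay, case `c > 0`, `μ ≥ 0`:
lower bound on solutions, for `μ > 0` the Gronwall-type exponential upper bound, and in
particular no blow-up in finite time. -/
theorem stmt_6 (μ σ c a : ℝ) (hc : 0 < c) (ha : 0 < a) (hμ0 : 0 ≤ μ)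
    (hμσ : μ + σ < 0) (hσμ : σ < -μ)
    (φ : ℝ → ℝ) (hφcont : ContinuousOn φ (Set.Iic 0))
    (hφ : ∀ t ≤ (0 : ℝ), -a / c ≤ φ t)
    (u : ℝ → ℝ) (hsol : IsModelSolution μ σ c a φ u) :
    (∀ t > (0 : ℝ), -a / c < u t) ∧
    (0 < μ → ∀ t ≥ (0 : ℝ),
      u t ≤ (φ 0 - a * σ / (c * μ)) * Real.exp (μ * t) + a * σ / (c * μ)) ∧
    (∀ T > (0 : ℝ), ∃ C : ℝ, ∀ t ∈ Set.Icc (0 : ℝ) T, |u t| ≤ C) :=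
  stmt_6_general μ σ c a hc ha hμσ φ hφ u hsol
end

section
/- Let a > 0, c ≠ 0, and |σ| < −μ (so (μ,σ) lies in the delay-independent stability cone). If the initial function φ is continuous and satisfies |φ(t)| ≤ |a/c| for all t ∈ [−2a, 0], then every solution u of the model DDE on [0,∞) satisfies u(t) → 0 as t → ∞. -/
/-!
The ball `|u| ≤ |a/c|` is invariant: as long as `u` stays in it, `|c u(t)| ≤ a`, so the delayed
argument `t - a - c u(t)` lies in `[t - 2a, t]`, inside the history already known to be in the
ball, and there the cone condition `|σ| < -μ` makes `u` point strictly inwards on the boundary.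
Once the delay is bounded by `2a`, a bound `|u| ≤ B` on the past turns the equation into the
scalar inequality `|u' - μ u| ≤ |σ| B`, and Grönwall's inequality with the negative rate `μ`
pushes `u` eventually below any `R > |σ| B / (-μ)`. Since `|σ| / (-μ) < 1`, iterating this
shrinks the bound geometrically to zero.
-/

open Set Filter Topology Real

theorem eventually_lt_of_hasDerivWithinAt_Ici_neg {g : ℝ → ℝ} {d t : ℝ}
    (hg : HasDerivWithinAt g d (Ici t) t) (hd : d < 0) : ∀ᶠ x in 𝓝[>] t, g x < g t := by
  filter_upwards [hg.Ioi_of_Ici.limsup_slope_le' (lt_irrefl t) hd, self_mem_nhdsWithin]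
    with x hslope hx
  rw [slope_def_field, div_neg_iff] at hslope
  rcases hslope with ⟨-, hneg⟩ | ⟨hneg, -⟩
  · exact absurd (sub_pos.2 hx) hneg.not_gt
  · exact sub_neg.1 hneg

theorem eventually_abs_lt_of_mul_hasDerivWithinAt_neg {f : ℝ → ℝ} {d t : ℝ}
    (hf : HasDerivWithinAt f d (Ici t) t) (hd : f t * d < 0) :
    ∀ᶠ x in 𝓝[>] t, |f x| < |f t| := by
  have hsq : HasDerivWithinAt (fun x ↦ f x * f x) (2 * (f t * d)) (Ici t) t :=
    (hf.mul hf).congr_deriv (by ring)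
  filter_upwards [eventually_lt_of_hasDerivWithinAt_Ici_neg hsq (by linarith)] with x hx
  rwa [← sq_lt_sq, sq, sq]

theorem tendsto_gronwallBound_atTop {δ K ε : ℝ} (hK : K < 0) :
    Tendsto (gronwallBound δ K ε) atTop (𝓝 (-(ε / K))) := by
  have hexp : Tendsto (fun x ↦ exp (K * x)) atTop (𝓝 0) :=
    tendsto_exp_atBot.comp (tendsto_id.const_mul_atTop_of_neg hK)
  rw [gronwallBound_of_K_ne_0 hK.ne]
  simpa using (hexp.const_mul δ).add ((hexp.sub_const 1).const_mul (ε / K))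

theorem eventually_lt_of_deriv_le_mul_add {g g' : ℝ → ℝ} {μ β R T : ℝ} (hμ : μ < 0)
    (hg : ContinuousOn g (Ici T)) (hg' : ∀ x ≥ T, HasDerivWithinAt g (g' x) (Ici x) x)
    (hbound : ∀ x ≥ T, g' x ≤ μ * g x + β) (hR : β < -μ * R) :
    ∀ᶠ x in atTop, g x < R := by
  have hlim : Tendsto (fun x ↦ gronwallBound (g T) μ β (x - T)) atTop (𝓝 (-(β / μ))) := by
    simp_rw [sub_eq_add_neg]
    exact (tendsto_gronwallBound_atTop hμ).comp (tendsto_atTop_add_const_right _ _ tendsto_id)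
  have hlimR : -(β / μ) < R := by
    rw [← neg_div, div_lt_iff_of_neg hμ]
    linarith
  filter_upwards [hlim.eventually_lt_const hlimR, eventually_ge_atTop T] with x hx hxT
  refine lt_of_le_of_lt ?_ hx
  exact le_gronwallBound_of_liminf_deriv_right_le (hg.mono Icc_subset_Ici_self)
    (fun y hy _ hr ↦ (hg' y hy.1).liminf_right_slope_le hr) le_rfl
    (fun y hy ↦ hbound y hy.1) x ⟨hxT, le_rfl⟩

theorem eventually_abs_lt_of_abs_deriv_sub_mul_le {f f' : ℝ → ℝ} {μ β R T : ℝ} (hμ : μ < 0)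
    (hf : ContinuousOn f (Ici T)) (hf' : ∀ x ≥ T, HasDerivWithinAt f (f' x) (Ici x) x)
    (hbound : ∀ x ≥ T, |f' x - μ * f x| ≤ β) (hR : β < -μ * R) :
    ∀ᶠ x in atTop, |f x| < R := by
  have hupper := eventually_lt_of_deriv_le_mul_add hμ hf hf'
    (fun x hx ↦ by linarith [(abs_le.1 (hbound x hx)).2]) hR
  have hlower := eventually_lt_of_deriv_le_mul_add (g := fun x ↦ -f x) hμ hf.neg
    (fun x hx ↦ (hf' x hx).neg) (fun x hx ↦ by linarith [(abs_le.1 (hbound x hx)).1]) hR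
  filter_upwards [hupper, hlower] with x hx hx'
  exact abs_lt.2 ⟨by linarith, hx⟩

theorem tendsto_zero_of_forall_eventually_abs_le {α : Type*} {l : Filter α} {f : α → ℝ}
    {b : ℕ → ℝ} (hb : Tendsto b atTop (𝓝 0)) (hf : ∀ n, ∀ᶠ x in l, |f x| ≤ b n) :
    Tendsto f l (𝓝 0) := by
  refine Metric.tendsto_nhds.2 fun ε hε ↦ ?_
  obtain ⟨n, hn⟩ := (hb.eventually_lt_const hε).exists
  filter_upwards [hf n] with x hx
  rw [Real.dist_0_eq_abs]
  exact hx.trans_lt hn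

theorem sub_sub_mul_mem_Icc_of_abs_le_abs_div {a c x : ℝ} (ha : 0 ≤ a) (hx : |x| ≤ |a / c|)
    (t : ℝ) : t - a - c * x ∈ Icc (t - 2 * a) t := by
  have hcx : |c * x| ≤ a := by
    rcases eq_or_ne c 0 with rfl | hc
    · simpa using ha
    calc |c * x| = |c| * |x| := abs_mul c x
      _ ≤ |c| * |a / c| := by gcongr
      _ = a := by rw [← abs_mul, mul_div_cancel₀ a hc, abs_of_nonneg ha]
  constructor <;> linarith [abs_le.1 hcx]

namespace IsModelSolution

variable {μ σ c a : ℝ} {φ u : ℝ → ℝ}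

theorem hasDerivWithinAt_Ici (hsol : IsModelSolution μ σ c a φ u) {t : ℝ} (ht : 0 ≤ t) :
    HasDerivWithinAt u (μ * u t + σ * u (t - a - c * u t)) (Ici t) t :=
  (hsol.2.2 t ht).mono (Ici_subset_Ici.2 ht)

theorem abs_le_abs_div (hsol : IsModelSolution μ σ c a φ u) (ha : 0 < a) (hc : c ≠ 0)
    (hcone : |σ| < -μ) (hφ : ∀ t ∈ Icc (-(2 * a)) 0, |φ t| ≤ |a / c|) :
    ∀ t, -(2 * a) ≤ t → |u t| ≤ |a / c| := by
  set K := |a / c|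
  have hK : 0 < K := abs_pos.2 (div_ne_zero ha.ne' hc)
  have hinit : ∀ t ∈ Icc (-(2 * a)) 0, |u t| ≤ K := fun t ht ↦ hsol.2.1 t ht.2 ▸ hφ t ht
  have habs : Continuous fun t ↦ |u t| := continuous_abs.comp hsol.1
  intro b hb
  have hclosed : IsClosed ({t | |u t| ≤ K} ∩ Icc (-(2 * a)) b) :=
    (isClosed_le habs continuous_const).inter isClosed_Icc
  refine hclosed.Icc_subset_of_forall_mem_nhdsGT_of_Icc_subset
    (hinit _ ⟨le_rfl, by linarith⟩) (fun t ht hhist ↦ ?_) ⟨hb, le_rfl⟩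
  rcases lt_or_ge t 0 with ht0 | ht0
  · filter_upwards [Ioo_mem_nhdsGT ht0] with x hx
    exact hinit x ⟨by linarith [ht.1, hx.1], hx.2.le⟩
  have hut : |u t| ≤ K := hhist ⟨ht.1, le_rfl⟩
  rcases hut.lt_or_eq with hlt | heq
  · filter_upwards [nhdsWithin_le_nhds
      (habs.continuousAt.eventually_lt continuousAt_const hlt)] with x hx
    exact hx.le
  have hdelay : |u (t - a - c * u t)| ≤ K := by
    have := sub_sub_mul_mem_Icc_of_abs_le_abs_div ha.le heq.le t
    exact hhist ⟨by linarith [this.1], this.2⟩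
  have hinward : u t * (μ * u t + σ * u (t - a - c * u t)) < 0 := by
    have hσ : σ * (u t * u (t - a - c * u t)) ≤ |σ| * (K * K) := by
      refine (le_abs_self _).trans ?_
      rw [abs_mul, abs_mul, heq]
      gcongr
    have hμσ : (μ + |σ|) * (K * K) < 0 := mul_neg_of_neg_of_pos (by linarith) (by positivity)
    calc u t * (μ * u t + σ * u (t - a - c * u t))
        = μ * (|u t| * |u t|) + σ * (u t * u (t - a - c * u t)) := by
          rw [abs_mul_abs_self]; ring
      _ ≤ μ * (K * K) + |σ| * (K * K) := by rw [heq]; linarith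
      _ < 0 := by linarith
  filter_upwards [eventually_abs_lt_of_mul_hasDerivWithinAt_neg
    (hsol.hasDerivWithinAt_Ici ht0) hinward] with x hx
  exact (hx.trans_eq heq).le

theorem eventually_abs_lt (hsol : IsModelSolution μ σ c a φ u) (ha : 0 ≤ a) (hμ : μ < 0)
    (hinv : ∀ t ≥ 0, |u t| ≤ |a / c|) {B R : ℝ} (hB : ∀ᶠ t in atTop, |u t| ≤ B)
    (hR : |σ| * B < -μ * R) : ∀ᶠ t in atTop, |u t| < R := by
  obtain ⟨T, hT⟩ := eventually_atTop.1 hB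
  set T₀ := max T 0 + 2 * a
  have hT₀ : 0 ≤ T₀ := by positivity
  refine eventually_abs_lt_of_abs_deriv_sub_mul_le hμ hsol.1.continuousOn
    (fun t ht ↦ hsol.hasDerivWithinAt_Ici (hT₀.trans ht)) (fun t ht ↦ ?_) hR
  have hdelay := sub_sub_mul_mem_Icc_of_abs_le_abs_div ha (hinv t (hT₀.trans ht)) t
  have hpast : |u (t - a - c * u t)| ≤ B := hT _ (by linarith [hdelay.1, le_max_left T 0])
  rw [add_sub_cancel_left, abs_mul]
  gcongr

end IsModelSolution

theorem stmt_7_general (μ σ c a : ℝ) (ha : 0 < a) (hc : c ≠ 0) (hcone : |σ| < -μ)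
    (φ : ℝ → ℝ)
    (hφ : ∀ t ∈ Set.Icc (-(2 * a)) 0, |φ t| ≤ |a / c|)
    (u : ℝ → ℝ) (hsol : IsModelSolution μ σ c a φ u) :
    Filter.Tendsto u Filter.atTop (nhds 0) := by
  have hμ : μ < 0 := by linarith [abs_nonneg σ]
  have hinv := hsol.abs_le_abs_div ha hc hcone hφ
  obtain ⟨s, hσs, hsμ⟩ := exists_between hcone
  set q := s / -μ
  have hq0 : 0 < q := div_pos (by linarith [abs_nonneg σ]) (by linarith)
  have hq1 : q < 1 := (div_lt_one (by linarith)).2 hsμ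
  have hμq : -μ * q = s := mul_div_cancel₀ s (by linarith)
  have hgeometric : ∀ n : ℕ, ∀ᶠ t in atTop, |u t| ≤ q ^ n * |a / c| := by
    intro n
    induction n with
    | zero =>
      filter_upwards [eventually_ge_atTop 0] with t ht
      simpa using hinv t (by linarith)
    | succ n ih =>
      refine (hsol.eventually_abs_lt ha.le hμ (fun t ht ↦ hinv t (by linarith)) ih ?_).mono
        fun _ h ↦ h.le
      calc |σ| * (q ^ n * |a / c|) < s * (q ^ n * |a / c|) := by gcongr
        _ = -μ * (q ^ (n + 1) * |a / c|) := by rw [← hμq]; ring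
  exact tendsto_zero_of_forall_eventually_abs_le
    (by simpa using (tendsto_pow_atTop_nhds_zero_of_lt_one hq0.le hq1).mul_const |a / c|) hgeometric

/-- Theorem 4.1 of Humphries–Magpantay: asymptotic stability in the
delay-independent cone `|σ| < -μ`. -/
theorem stmt_7 (μ σ c a : ℝ) (ha : 0 < a) (hc : c ≠ 0) (hcone : |σ| < -μ)
    (φ : ℝ → ℝ) (hφcont : ContinuousOn φ (Set.Iic 0))
    (hφ : ∀ t ∈ Set.Icc (-(2 * a)) 0, |φ t| ≤ |a / c|)
    (u : ℝ → ℝ) (hsol : IsModelSolution μ σ c a φ u) :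
    Filter.Tendsto u Filter.atTop (nhds 0) :=
  stmt_7_general μ σ c a ha hc hcone φ hφ u hsol
end

section
/- Let a > 0, c ≠ 0, δ ∈ (0, |a/c|), r = a + |c|δ, and suppose u is a solution of the model DDE with |u(t)| ≤ δ for all t ∈ [−r, 3r]. Then: (i) |u'(t)| ≤ (|μ|+|σ|)δ for all t ∈ [0, 3r]; (ii) for all t ∈ [r, 2r], the function g(t) = u(t − a − c u(t)) satisfies |g'(t)| ≤ D1 δ, where D1 = (|μ|+|σ|)(1 + (|μ|+|σ|)|c|δ); (iii) for all t ∈ [2r, 3r], |g''(t)| ≤ D2 δ, where D2 = (D1² + (|μ|+|σ|)³|c|δ)(1 + |σ c|δ). -/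
open Set

namespace ModelDDE

variable (μ σ c a : ℝ) (u : ℝ → ℝ)

def delayArg (t : ℝ) : ℝ := t - a - c * u t

/- Along a solution, `rhs`, `delayedDeriv`, `rhsDeriv` and `delayedSecondDeriv` are
`u'`, `g'`, `u''` and `g''` for `g = u ∘ delayArg`. -/
def rhs (t : ℝ) : ℝ := μ * u t + σ * u (delayArg c a u t)

def delayedDeriv (t : ℝ) : ℝ :=
  rhs μ σ c a u (delayArg c a u t) * (1 - c * rhs μ σ c a u t)

def rhsDeriv (t : ℝ) : ℝ := μ * rhs μ σ c a u t + σ * delayedDeriv μ σ c a u t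

def delayedSecondDeriv (t : ℝ) : ℝ :=
  rhsDeriv μ σ c a u (delayArg c a u t) * (1 - c * rhs μ σ c a u t) ^ 2
    - c * rhs μ σ c a u (delayArg c a u t) * rhsDeriv μ σ c a u t

variable {μ σ c a u}

theorem delayArg_mem_Icc {δ x y s : ℝ} (hcδ : |c| * δ ≤ a) (hus : |u s| ≤ δ)
    (hxs : x + (a + |c| * δ) ≤ s) (hsy : s ≤ y) : delayArg c a u s ∈ Icc x y := by
  have hcu : |c * u s| ≤ |c| * δ := by
    rw [abs_mul]
    exact mul_le_mul_of_nonneg_left hus (abs_nonneg c)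
  obtain ⟨hlo, hhi⟩ := abs_le.mp hcu
  exact ⟨by unfold delayArg; linarith, by unfold delayArg; linarith⟩

section Derivatives

theorem hasDerivWithinAt_delayArg {u' t : ℝ} {s : Set ℝ} (h : HasDerivWithinAt u u' s t) :
    HasDerivWithinAt (delayArg c a u) (1 - c * u') s t :=
  ((hasDerivWithinAt_id t s).sub_const a).sub (h.const_mul c)

variable (hu : ∀ t, 0 ≤ t → HasDerivWithinAt u (rhs μ σ c a u t) (Ici 0) t)
  {s : Set ℝ} (hs : s ⊆ Ici 0) (hη : MapsTo (delayArg c a u) s (Ici 0))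
include hu hs hη

theorem hasDerivWithinAt_comp_delayArg {t : ℝ} (ht : t ∈ s) :
    HasDerivWithinAt (fun x => u (delayArg c a u x)) (delayedDeriv μ σ c a u t) s t :=
  (hu _ (hη ht)).comp t (hasDerivWithinAt_delayArg ((hu t (hs ht)).mono hs)) hη

theorem hasDerivWithinAt_rhs {t : ℝ} (ht : t ∈ s) :
    HasDerivWithinAt (rhs μ σ c a u) (rhsDeriv μ σ c a u t) s t :=
  (((hu t (hs ht)).mono hs).const_mul μ).add
    ((hasDerivWithinAt_comp_delayArg hu hs hη ht).const_mul σ)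

theorem hasDerivWithinAt_delayedDeriv {s' : Set ℝ} (hs' : s' ⊆ s)
    (hη' : MapsTo (delayArg c a u) s' s) {t : ℝ} (ht : t ∈ s') :
    HasDerivWithinAt (delayedDeriv μ σ c a u) (delayedSecondDeriv μ σ c a u t) s' t := by
  have hdelayed := (hasDerivWithinAt_rhs hu hs hη (hη' ht)).comp t
    (hasDerivWithinAt_delayArg ((hu t (hs (hs' ht))).mono (hs'.trans hs))) hη'
  have hfactor := (((hasDerivWithinAt_rhs hu hs hη (hs' ht)).mono hs').const_mul c).const_sub 1
  refine (hdelayed.mul hfactor).congr_deriv ?_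
  simp only [delayedSecondDeriv, Function.comp_apply]
  ring

end Derivatives

section Bounds

theorem abs_mul_add_mul_le {x y A B : ℝ} (hx : |x| ≤ A) (hy : |y| ≤ B) :
    |μ * x + σ * y| ≤ |μ| * A + |σ| * B := by
  calc |μ * x + σ * y| ≤ |μ| * |x| + |σ| * |y| := by
        rw [← abs_mul, ← abs_mul]; exact abs_add_le _ _
    _ ≤ |μ| * A + |σ| * B := by gcongr

theorem abs_one_sub_mul_le {x B : ℝ} (hx : |x| ≤ B) : |1 - c * x| ≤ 1 + |c| * B := by
  calc |1 - c * x| ≤ |1| + |c| * |x| := by rw [← abs_mul]; exact abs_sub _ _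
    _ ≤ 1 + |c| * B := by rw [abs_one]; gcongr

theorem abs_rhs_le {δ t : ℝ} (hu : |u t| ≤ δ) (hη : |u (delayArg c a u t)| ≤ δ) :
    |rhs μ σ c a u t| ≤ (|μ| + |σ|) * δ :=
  (abs_mul_add_mul_le hu hη).trans_eq (by ring)

theorem abs_delayedDeriv_le {B t : ℝ} (hF : |rhs μ σ c a u t| ≤ B)
    (hFη : |rhs μ σ c a u (delayArg c a u t)| ≤ B) :
    |delayedDeriv μ σ c a u t| ≤ B * (1 + |c| * B) := by
  rw [delayedDeriv, abs_mul]
  exact mul_le_mul hFη (abs_one_sub_mul_le hF) (abs_nonneg _) ((abs_nonneg _).trans hF)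

theorem abs_delayedSecondDeriv_le {B K t : ℝ} (hF : |rhs μ σ c a u t| ≤ B)
    (hFη : |rhs μ σ c a u (delayArg c a u t)| ≤ B) (hF' : |rhsDeriv μ σ c a u t| ≤ K)
    (hF'η : |rhsDeriv μ σ c a u (delayArg c a u t)| ≤ K) :
    |delayedSecondDeriv μ σ c a u t| ≤ K * ((1 + |c| * B) ^ 2 + |c| * B) := by
  have hB : 0 ≤ B := (abs_nonneg _).trans hF
  have hK : 0 ≤ K := (abs_nonneg _).trans hF'
  have hfactor := abs_one_sub_mul_le (c := c) hF
  calc |delayedSecondDeriv μ σ c a u t|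
      ≤ |rhsDeriv μ σ c a u (delayArg c a u t)| * |1 - c * rhs μ σ c a u t| ^ 2
        + |c| * |rhs μ σ c a u (delayArg c a u t)| * |rhsDeriv μ σ c a u t| := by
        rw [← abs_pow, ← abs_mul, ← abs_mul, ← abs_mul]; exact abs_sub _ _
    _ ≤ K * (1 + |c| * B) ^ 2 + |c| * B * K := by gcongr
    _ = K * ((1 + |c| * B) ^ 2 + |c| * B) := by ring

end Bounds

end ModelDDE

open ModelDDE in
/-- derivative bounds of Section 4 of Humphries–Magpantay:
if a solution stays in `[-δ,δ]` on `[-r, 3r]` with `r = a + |c|δ`, then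
(i) `|u'(t)| ≤ (|μ|+|σ|)δ` on `[0, 3r]` (where `u'(t)` is the right-hand side of the DDE),
(ii) `g(t) = u(t - a - c u(t))` is differentiable with `|g'(t)| ≤ D₁ δ` on `[r, 2r]`, and
(iii) `g'` is differentiable with `|g''(t)| ≤ D₂ δ` on `[2r, 3r]`. -/
theorem stmt_8 (μ σ c a δ : ℝ) (ha : 0 < a) (hc : c ≠ 0)
    (hδ0 : 0 < δ) (hδ1 : δ < |a / c|)
    (φ u : ℝ → ℝ) (hsol : IsModelSolution μ σ c a φ u)
    (hbd : ∀ t ∈ Set.Icc (-(a + |c| * δ)) (3 * (a + |c| * δ)), |u t| ≤ δ) :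
    (∀ t ∈ Set.Icc (0 : ℝ) (3 * (a + |c| * δ)),
      |μ * u t + σ * u (t - a - c * u t)| ≤ (|μ| + |σ|) * δ) ∧
    ∃ g' g'' : ℝ → ℝ,
      (∀ t ∈ Set.Icc (a + |c| * δ) (3 * (a + |c| * δ)),
        HasDerivWithinAt (fun s => u (s - a - c * u s)) (g' t)
          (Set.Icc (a + |c| * δ) (3 * (a + |c| * δ))) t) ∧
      (∀ t ∈ Set.Icc (a + |c| * δ) (2 * (a + |c| * δ)),
        |g' t| ≤ (|μ| + |σ|) * (1 + (|μ| + |σ|) * |c| * δ) * δ) ∧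
      (∀ t ∈ Set.Icc (2 * (a + |c| * δ)) (3 * (a + |c| * δ)),
        HasDerivWithinAt g' (g'' t)
          (Set.Icc (2 * (a + |c| * δ)) (3 * (a + |c| * δ))) t) ∧
      (∀ t ∈ Set.Icc (2 * (a + |c| * δ)) (3 * (a + |c| * δ)),
        |g'' t| ≤ (((|μ| + |σ|) * (1 + (|μ| + |σ|) * |c| * δ)) ^ 2
            + (|μ| + |σ|) ^ 3 * |c| * δ) * (1 + |σ * c| * δ) * δ) := by
  obtain ⟨-, -, hu⟩ := hsol
  have hcδ : |c| * δ ≤ a := by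
    rw [abs_div, abs_of_pos ha, lt_div_iff₀ (abs_pos.mpr hc), mul_comm] at hδ1
    exact hδ1.le
  have hr : 0 < a + |c| * δ := by positivity
  set r := a + |c| * δ
  have hη (x : ℝ) (hx : -r ≤ x) (s : ℝ) (hxs : x + r ≤ s) (hs : s ≤ 3 * r) :
      delayArg c a u s ∈ Icc x (3 * r) :=
    delayArg_mem_Icc hcδ (hbd s ⟨by linarith, hs⟩) hxs hs
  have hη₁ : MapsTo (delayArg c a u) (Icc r (3 * r)) (Icc 0 (3 * r)) :=
    fun s hs => hη 0 (by linarith) s (by linarith [hs.1]) hs.2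
  have hη₂ : MapsTo (delayArg c a u) (Icc (2 * r) (3 * r)) (Icc r (3 * r)) :=
    fun s hs => hη r (by linarith) s (by linarith [hs.1]) hs.2
  have hI₁ : Icc r (3 * r) ⊆ Icc 0 (3 * r) := Icc_subset_Icc_left hr.le
  have hI₂ : Icc (2 * r) (3 * r) ⊆ Icc r (3 * r) := Icc_subset_Icc_left (by linarith)
  have hF : ∀ t ∈ Icc 0 (3 * r), |rhs μ σ c a u t| ≤ (|μ| + |σ|) * δ := fun t ht =>
    abs_rhs_le (hbd t ⟨by linarith [ht.1], ht.2⟩) (hbd _ (hη (-r) le_rfl t (by linarith [ht.1]) ht.2))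
  have hG : ∀ t ∈ Icc r (3 * r), |delayedDeriv μ σ c a u t|
      ≤ (|μ| + |σ|) * δ * (1 + |c| * ((|μ| + |σ|) * δ)) := fun t ht =>
    abs_delayedDeriv_le (hF t (hI₁ ht)) (hF _ (hη₁ ht))
  have hF' : ∀ t ∈ Icc r (3 * r), |rhsDeriv μ σ c a u t|
      ≤ |μ| * ((|μ| + |σ|) * δ) + |σ| * ((|μ| + |σ|) * δ * (1 + |c| * ((|μ| + |σ|) * δ))) :=
    fun t ht => abs_mul_add_mul_le (hF t (hI₁ ht)) (hG t ht)
  have hs : Icc r (3 * r) ⊆ Ici 0 := hI₁.trans Icc_subset_Ici_self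
  have hηs : MapsTo (delayArg c a u) (Icc r (3 * r)) (Ici 0) := hη₁.mono_right Icc_subset_Ici_self
  refine ⟨hF, delayedDeriv μ σ c a u, delayedSecondDeriv μ σ c a u,
    fun t ht => hasDerivWithinAt_comp_delayArg hu hs hηs ht,
    fun t ht => (hG t ⟨ht.1, by linarith [ht.2]⟩).trans_eq (by ring),
    fun t ht => hasDerivWithinAt_delayedDeriv hu hs hηs hI₂ hη₂ ht,
    fun t ht => ?_⟩
  refine (abs_delayedSecondDeriv_le (hF t (hI₁ (hI₂ ht))) (hF _ (hI₁ (hη₂ ht)))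
    (hF' t (hI₂ ht)) (hF' _ (hη₂ ht))).trans_eq ?_
  rw [abs_mul]
  ring
end

section
/- Let a > 0, σ ≤ μ, σ < −μ, r > 0 and D1 ≥ |μ| + |σ|, and suppose r D1 − 1 ≤ −μ/σ. If μ ≥ 0, then σ ≥ −1/r. If μ < 0, then μ r ∈ [−3 + 2√2, 0] and σ ≥ −(1/r)[ (1 + μ r)/2 + (1/2)√(1 + 6 μ r + (μ r)²) ] ≥ −1/r. -/
/-!
Multiplying `r D₁ - 1 ≤ -μ/σ` by `σ r < 0` and using `D₁ ≥ |μ| + |σ|` gives, for `m = μ r` and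
`x = σ r`, the inequality `-m ≤ x (|m| + |x|) - x`. For `μ ≥ 0` this reads `(x + 1)(m - x) ≥ 0`
with `m - x > 0`, so `x ≥ -1`. For `μ < 0` it reads `x² + (1 + m) x - m ≤ 0`: `x` lies above the
smaller root of this quadratic, whose discriminant `1 + 6m + m²` must be nonnegative, and
`m > -1` rules out the branch `m ≤ -3 - 2√2`.
-/

lemma neg_le_mul_abs_add_abs_sub {μ σ r d : ℝ} (hσ : σ < 0) (hr : 0 < r)
    (hd : |μ| + |σ| ≤ d) (h : r * d - 1 ≤ -μ / σ) :
    -(μ * r) ≤ σ * r * (|μ * r| + |σ * r|) - σ * r := by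
  have hσr : σ * r < 0 := mul_neg_of_neg_of_pos hσ hr
  have hmul : -μ ≤ (r * d - 1) * σ := (le_div_iff_of_neg hσ).1 h
  have hd' : σ * r * (r * d) ≤ σ * r * (r * (|μ| + |σ|)) :=
    mul_le_mul_of_nonpos_left (by gcongr) hσr.le
  rw [abs_mul, abs_mul, abs_of_pos hr]
  nlinarith

lemma neg_one_le_of_neg_le_mul_abs_add_abs_sub {m x : ℝ} (hm : 0 ≤ m) (hx : x < 0)
    (h : -m ≤ x * (|m| + |x|) - x) : -1 ≤ x := by
  rw [abs_of_nonneg hm, abs_of_neg hx] at h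
  have hfactor : 0 ≤ (x + 1) * (m - x) := by linarith
  have hmx : 0 < m - x := by linarith
  linarith [nonneg_of_mul_nonneg_left hfactor hmx]

lemma quadratic_nonpos_of_neg_le_mul_abs_add_abs_sub {m x : ℝ} (hm : m < 0) (hx : x < 0)
    (h : -m ≤ x * (|m| + |x|) - x) : x ^ 2 + (1 + m) * x - m ≤ 0 := by
  rw [abs_of_neg hm, abs_of_neg hx] at h
  linarith

lemma discrim_nonneg_and_neg_sub_sqrt_le {b c x : ℝ} (h : x ^ 2 + b * x + c ≤ 0) :
    0 ≤ discrim 1 b c ∧ -b - √(discrim 1 b c) ≤ 2 * x := by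
  have hsq : (2 * x + b) ^ 2 ≤ discrim 1 b c := by
    unfold discrim; nlinarith
  exact ⟨(sq_nonneg _).trans hsq, by linarith [neg_abs_le (2 * x + b), Real.abs_le_sqrt hsq]⟩

lemma neg_one_lt_of_quadratic_nonpos {m x : ℝ} (hx : x < 0)
    (h : x ^ 2 + (1 + m) * x - m ≤ 0) : -1 < m := by
  by_contra! hm
  nlinarith [mul_nonneg (neg_nonneg.2 hx.le) (show 0 ≤ -(1 + m) by linarith)]

lemma neg_three_add_two_sqrt_two_le {m : ℝ} (hm : -1 < m) (hD : 0 ≤ 1 + 6 * m + m ^ 2) :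
    -3 + 2 * √2 ≤ m := by
  have h2 : √2 ^ 2 = 2 := Real.sq_sqrt zero_le_two
  nlinarith [Real.sqrt_nonneg 2]

lemma sqrt_one_add_six_mul_add_sq_le {m : ℝ} (hm : m ≤ 0) :
    √(1 + 6 * m + m ^ 2) ≤ 1 - m :=
  Real.sqrt_le_iff.2 ⟨by linarith, by nlinarith⟩

lemma neg_one_div_mul_le_iff {r B σ : ℝ} (hr : 0 < r) :
    -(1 / r) * B ≤ σ ↔ -B ≤ σ * r := by
  rw [← div_le_iff₀ hr, neg_div, one_div, neg_mul, inv_mul_eq_div]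

theorem stmt_15_general (μ σ r d1 : ℝ) (h1 : σ ≤ μ) (h2 : σ < -μ)
    (hr : 0 < r) (hd1 : |μ| + |σ| ≤ d1)
    (hyp : r * d1 - 1 ≤ -μ / σ) :
    (0 ≤ μ → -(1 / r) ≤ σ) ∧
    (μ < 0 →
      μ * r ∈ Set.Icc (-3 + 2 * Real.sqrt 2) 0 ∧
      -(1 / r) * ((1 + μ * r) / 2 + Real.sqrt (1 + 6 * (μ * r) + (μ * r) ^ 2) / 2) ≤ σ ∧
      -(1 / r) ≤
        -(1 / r) * ((1 + μ * r) / 2 + Real.sqrt (1 + 6 * (μ * r) + (μ * r) ^ 2) / 2)) := by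
  have hσ : σ < 0 := by rcases le_or_gt 0 μ with hμ | hμ <;> linarith
  have hσr : σ * r < 0 := mul_neg_of_neg_of_pos hσ hr
  have key := neg_le_mul_abs_add_abs_sub hσ hr hd1 hyp
  refine ⟨fun hμ => ?_, fun hμ => ?_⟩
  · have := neg_one_le_of_neg_le_mul_abs_add_abs_sub (mul_nonneg hμ hr.le) hσr key
    simpa using (neg_one_div_mul_le_iff (B := 1) hr).2 this
  · have hm : μ * r < 0 := mul_neg_of_neg_of_pos hμ hr
    have hquad := quadratic_nonpos_of_neg_le_mul_abs_add_abs_sub hm hσr key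
    have hdisc : discrim 1 (1 + μ * r) (-(μ * r)) = 1 + 6 * (μ * r) + (μ * r) ^ 2 := by
      unfold discrim; ring
    obtain ⟨hD, hroot⟩ := discrim_nonneg_and_neg_sub_sqrt_le (x := σ * r)
      (by linarith : (σ * r) ^ 2 + (1 + μ * r) * (σ * r) + -(μ * r) ≤ 0)
    rw [hdisc] at hD hroot
    have hB : (1 + μ * r) / 2 + √(1 + 6 * (μ * r) + (μ * r) ^ 2) / 2 ≤ 1 := by
      linarith [sqrt_one_add_six_mul_add_sq_le hm.le]
    refine ⟨⟨neg_three_add_two_sqrt_two_le (neg_one_lt_of_quadratic_nonpos hσr hquad) hD,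
      hm.le⟩, (neg_one_div_mul_le_iff hr).2 (by linarith), ?_⟩
    simpa using mul_le_mul_of_nonpos_left hB (neg_nonpos.2 (one_div_pos.2 hr).le)

/-- Lemma B.1 of Humphries–Magpantay: consequences of the inequality
`r D₁ - 1 ≤ -μ/σ`, using only `D₁ ≥ |μ| + |σ|`. -/
theorem stmt_15 (μ σ a r d1 : ℝ) (ha : 0 < a) (h1 : σ ≤ μ) (h2 : σ < -μ)
    (hr : 0 < r) (hd1 : |μ| + |σ| ≤ d1)
    (hyp : r * d1 - 1 ≤ -μ / σ) :
    (0 ≤ μ → -(1 / r) ≤ σ) ∧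
    (μ < 0 →
      μ * r ∈ Set.Icc (-3 + 2 * Real.sqrt 2) 0 ∧
      -(1 / r) * ((1 + μ * r) / 2 + Real.sqrt (1 + 6 * (μ * r) + (μ * r) ^ 2) / 2) ≤ σ ∧
      -(1 / r) ≤
        -(1 / r) * ((1 + μ * r) / 2 + Real.sqrt (1 + 6 * (μ * r) + (μ * r) ^ 2) / 2)) :=
  stmt_15_general μ σ r d1 h1 h2 hr hd1 hyp
end
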